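/- arXiv:1104.2524 — 6 statements merged into one kernel-verified Lean document; each statement's English description precedes it below -/
import Mathlib

section
/- Let G be a chordal graph and let 𝒯 = (T, {T_u}_{u∈V(G)}) be a tree model of G. Then the following statements are equivalent: (i) 𝒯 is a minimal tree model of G, i.e., |V(T)| is smallest possible among all tree models of G; (ii) 𝒯 is isomorphic to the tree model defined by some clique tree of G; (iii) for every edge XY of T, contracting XY in T and in every subtree T_u containing both X and Y yields a tree model of a graph different from G; (iv) the map ψ defined by ψ(X) = {u ∈ V(G) : X ∈ V(T_u)} is a bijection between the nodes of T and the maximal cliques of G. -/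
open SimpleGraph

/-- The degree of a vertex in a graph, via `Set.ncard`. -/
noncomputable def deg {W : Type*} (T : SimpleGraph W) (w : W) : ℕ :=
  (T.neighborSet w).ncard

/-- The set of leaves (degree-one vertices) of a graph. -/
def leaves {W : Type*} (T : SimpleGraph W) : Set W :=
  {w | deg T w = 1}

/-- The number of leaves. -/
noncomputable def numLeaves {W : Type*} (T : SimpleGraph W) : ℕ :=
  (leaves T).ncard

/-- The set of leaves of the subgraph of `T` induced by `s`
(nodes of `s` with exactly one neighbour inside `s`). -/
def subLeaves {W : Type*} (T : SimpleGraph W) (s : Set W) : Set W :=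
  {w | w ∈ s ∧ (T.neighborSet w ∩ s).ncard = 1}

/-- The number of leaves of the subtree induced by `s`. -/
noncomputable def numSubLeaves {W : Type*} (T : SimpleGraph W) (s : Set W) : ℕ :=
  (subLeaves T s).ncard

/-- A tree model of a graph `G`: a finite host tree `T` together with nonempty
subtrees `sub u` such that distinct vertices are adjacent in `G` iff their
subtrees intersect. -/
structure TreeModel {V : Type*} (G : SimpleGraph V) where
  W : Type
  finW : Finite W
  T : SimpleGraph W
  tree : T.IsTree
  sub : V → Set W
  sub_nonempty : ∀ u, (sub u).Nonempty
  sub_conn : ∀ u, (T.induce (sub u)).Connected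
  adj_iff : ∀ u v, u ≠ v → (G.Adj u v ↔ (sub u ∩ sub v).Nonempty)

/-- The leafage of a chordal graph: the minimum number of host-tree leaves over
all tree models. -/
noncomputable def leafage {V : Type*} (G : SimpleGraph V) : ℕ :=
  sInf {n | ∃ M : TreeModel G, numLeaves M.T = n}

/-- The vertex leafage of a chordal graph: the least `k` such that `G` has a tree
model all of whose subtrees have at most `k` leaves. -/
noncomputable def vleafage {V : Type*} (G : SimpleGraph V) : ℕ :=
  sInf {k | ∃ M : TreeModel G, ∀ u, numSubLeaves M.T (M.sub u) ≤ k}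

/-- A maximal clique of `G`. -/
def IsMaxClique {V : Type*} (G : SimpleGraph V) (C : Set V) : Prop :=
  G.IsClique C ∧ ∀ D, G.IsClique D → C ⊆ D → D = C

/-- The type of maximal cliques of `G`. -/
abbrev MaxCliques {V : Type*} (G : SimpleGraph V) := {C : Set V // IsMaxClique G C}

/-- A clique tree of `G`: a tree whose nodes are exactly the maximal cliques of `G`,
such that every node on the path between nodes `C` and `C'` contains `C ∩ C'`. -/
structure CliqueTree {V : Type*} (G : SimpleGraph V) where
  T : SimpleGraph (MaxCliques G)
  tree : T.IsTree
  path_cond : ∀ (C C' : MaxCliques G) (p : T.Walk C C'), p.IsPath →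
    ∀ C'' ∈ p.support, C.1 ∩ C'.1 ⊆ C''.1

/-- The subtree (node set) assigned to a vertex `u` in the tree model defined by a
clique tree of `G`: the set of maximal cliques containing `u`. -/
def cliqueSub {V : Type*} (G : SimpleGraph V) (u : V) : Set (MaxCliques G) :=
  {C | u ∈ C.1}

/-- The set of nodes of degree at least 3. -/
def Hh {W : Type*} (T : SimpleGraph W) : Set W := {w | 3 ≤ deg T w}

/-- The set of edges incident to a node of degree at least 3. -/
def Ee {W : Type*} (T : SimpleGraph W) : Set (Sym2 W) :=
  {e | e ∈ T.edgeSet ∧ ∃ w ∈ e, w ∈ Hh T}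

/-- The host tree obtained by contracting the edge `XY` of the host tree of `M`
onto the node `X` (the node `Y` is removed and `X` inherits its neighbours). -/
def contractT {V : Type} {G : SimpleGraph V} (M : TreeModel G) (X Y : M.W) :
    SimpleGraph {w : M.W // w ≠ Y} :=
  SimpleGraph.fromRel (fun a b =>
    M.T.Adj a b ∨ ((a : M.W) = X ∧ M.T.Adj Y b) ∨ ((b : M.W) = X ∧ M.T.Adj (a : M.W) Y))

/-- The subtree of a vertex `u` after contracting the edge `XY` of the host tree
onto `X`: every subtree containing `Y` now contains `X` instead. -/
def contractSub {V : Type} {G : SimpleGraph V} (M : TreeModel G) (X Y : M.W) (u : V) :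
    Set {w : M.W // w ≠ Y} :=
  {w | (w : M.W) ∈ M.sub u ∨ ((w : M.W) = X ∧ Y ∈ M.sub u)}

/-!
Write `ψ(X)` (`TreeModel.bag`) for the set of vertices whose subtree contains the node `X`.
Bags are cliques, and by the Helly property of subtrees of a tree every maximal clique is a bag.
Hence every tree model has at least as many nodes as `G` has maximal cliques, and a model whose
bag map is a bijection onto the maximal cliques is minimal and, after relabelling each node by its
bag, is a clique tree. Contracting an edge `XY` gives a tree model with one node fewer, of the
graph `G` itself as soon as `ψ(X) ∪ ψ(Y)` is a clique, in particular when `ψ(X) ⊆ ψ(Y)`; so a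
minimal model admits no such contraction. Conversely, a node `X` outside a subtree `S` has a
neighbour through which every subtree containing `X` and meeting `S` passes: so if a bag `ψ(X)`
were not a maximal clique (take `S = T_v` with `v` completing it to a larger clique), or equalled
another bag `ψ(X')` (take `S = {X'}`), it would be contained in a neighbouring bag, and
contracting that edge would preserve `G`.
-/

theorem Nat.card_subtype_ne_add_one {α : Type*} [Finite α] (a : α) :
    Nat.card {x // x ≠ a} + 1 = Nat.card α := by
  have := Fintype.ofFinite α
  classical
  rw [Nat.card_eq_fintype_card, Nat.card_eq_fintype_card, Fintype.card_subtype_compl,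
    Fintype.card_subtype_eq]
  have : 0 < Fintype.card α := Fintype.card_pos_iff.mpr ⟨a⟩
  omega

namespace SimpleGraph

variable {V W : Type*}

theorem Reachable.map_of_adj_or_eq {G : SimpleGraph V} {H : SimpleGraph W} {f : V → W}
    (hf : ∀ a b, G.Adj a b → H.Adj (f a) (f b) ∨ f a = f b) {a b : V} (h : G.Reachable a b) :
    H.Reachable (f a) (f b) := by
  obtain ⟨p⟩ := h
  induction p with
  | nil => rfl
  | cons hadj _ ih =>
    rcases hf _ _ hadj with h | h
    · exact h.reachable.trans ih
    · exact h ▸ ih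

theorem Connected.map_of_adj_or_eq {G : SimpleGraph V} {H : SimpleGraph W} {f : V → W}
    (hf : ∀ a b, G.Adj a b → H.Adj (f a) (f b) ∨ f a = f b) (hsurj : f.Surjective)
    (hG : G.Connected) : H.Connected := by
  have : Nonempty V := hG.nonempty
  refine (connected_iff_exists_forall_reachable _).mpr ⟨f (Classical.arbitrary V), fun w => ?_⟩
  obtain ⟨v, rfl⟩ := hsurj w
  exact (hG.preconnected _ v).map_of_adj_or_eq hf

namespace IsTree

variable {T : SimpleGraph W}

noncomputable def path (hT : T.IsTree) (x y : W) : T.Walk x y :=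
  (hT.existsUnique_path x y).exists.choose

theorem path_isPath (hT : T.IsTree) (x y : W) : (hT.path x y).IsPath :=
  (hT.existsUnique_path x y).exists.choose_spec

theorem eq_path (hT : T.IsTree) {x y : W} {p : T.Walk x y} (hp : p.IsPath) : p = hT.path x y :=
  (hT.existsUnique_path x y).unique hp (hT.path_isPath x y)

theorem support_path_subset (hT : T.IsTree) {x y : W} (p : T.Walk x y) :
    (hT.path x y).support ⊆ p.support := by
  classical
  exact hT.eq_path p.bypass_isPath ▸ p.support_bypass_subset_support

theorem mem_of_mem_support_path (hT : T.IsTree) {s : Set W} (hs : (T.induce s).Connected)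
    {x y z : W} (hx : x ∈ s) (hy : y ∈ s) (hz : z ∈ (hT.path x y).support) : z ∈ s := by
  obtain ⟨p⟩ := hs.preconnected ⟨x, hx⟩ ⟨y, hy⟩
  obtain ⟨z', -, rfl⟩ := List.mem_map.mp <|
    Walk.support_map _ _ ▸ hT.support_path_subset (p.map (Embedding.induce s).toHom) hz
  exact z'.2

theorem induce_connected_of_forall_mem_support_path (hT : T.IsTree) {s : Set W}
    (hs : s.Nonempty) (h : ∀ x ∈ s, ∀ y ∈ s, ∀ z ∈ (hT.path x y).support, z ∈ s) :
    (T.induce s).Connected := by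
  obtain ⟨x, hx⟩ := hs
  exact (connected_iff_exists_forall_reachable _).mpr
    ⟨⟨x, hx⟩, fun ⟨y, hy⟩ => ((hT.path x y).induce s (h x hx y hy)).reachable⟩

theorem induce_inter_connected (hT : T.IsTree) {s t : Set W} (hs : (T.induce s).Connected)
    (ht : (T.induce t).Connected) (hst : (s ∩ t).Nonempty) : (T.induce (s ∩ t)).Connected :=
  hT.induce_connected_of_forall_mem_support_path hst fun _ hx _ hy _ hz =>
    ⟨hT.mem_of_mem_support_path hs hx.1 hy.1 hz, hT.mem_of_mem_support_path ht hx.2 hy.2 hz⟩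

theorem exists_median (hT : T.IsTree) (a b c : W) : ∃ m, m ∈ (hT.path a b).support ∧
    m ∈ (hT.path b c).support ∧ m ∈ (hT.path a c).support := by
  set p := hT.path a b
  set q := hT.path a c
  classical
  by_cases hb : b ∈ q.support
  · exact ⟨b, p.end_mem_support, (hT.path b c).start_mem_support, hb⟩
  -- Leaving `p.support \ q.support` along the path from `b` to `c` lands in both `p` and `q`.
  obtain ⟨d, hd, hxp, hy⟩ := (hT.path b c).exists_boundary_dart
    {z | z ∈ p.support ∧ z ∉ q.support} ⟨p.end_mem_support, hb⟩
    (fun h => h.2 q.end_mem_support)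
  have hyr : d.snd ∈ (p.reverse.append q).support :=
    hT.support_path_subset _ ((hT.path b c).dart_snd_mem_support_of_mem_darts hd)
  have hypq : d.snd ∈ p.support ∨ d.snd ∈ q.support := by
    simpa [Walk.mem_support_append_iff] using hyr
  have hyq : d.snd ∈ q.support := by
    by_contra h
    exact hy ⟨hypq.resolve_right h, h⟩
  have hyp : d.snd ∈ p.support := p.support_takeUntil_subset_support hxp.1 <|
    hT.isAcyclic.mem_support_of_ne_mem_support_of_adj_of_isPath
      ((hT.path_isPath a b).takeUntil hxp.1) ((hT.path_isPath a c).takeUntil hyq) d.adj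
      (fun h => hxp.2 (q.support_takeUntil_subset_support hyq h))
  exact ⟨d.snd, hyp, (hT.path b c).dart_snd_mem_support_of_mem_darts hd, hyq⟩

theorem inter_inter_nonempty {A B C : Set W} (hT : T.IsTree) (hA : (T.induce A).Connected)
    (hB : (T.induce B).Connected) (hC : (T.induce C).Connected) (hAB : (A ∩ B).Nonempty)
    (hAC : (A ∩ C).Nonempty) (hBC : (B ∩ C).Nonempty) : (A ∩ B ∩ C).Nonempty := by
  obtain ⟨a, haB, haC⟩ := hBC
  obtain ⟨b, hbA, hbC⟩ := hAC
  obtain ⟨c, hcA, hcB⟩ := hAB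
  obtain ⟨m, hab, hbc, hac⟩ := hT.exists_median a b c
  exact ⟨m, ⟨hT.mem_of_mem_support_path hA hbA hcA hbc,
    hT.mem_of_mem_support_path hB haB hcB hac⟩, hT.mem_of_mem_support_path hC haC hbC hab⟩

theorem helly {ι : Type*} {s : Finset ι} (hT : T.IsTree) (hs : s.Nonempty) :
    ∀ {F : ι → Set W}, (∀ i ∈ s, (T.induce (F i)).Connected) →
      (∀ i ∈ s, ∀ j ∈ s, (F i ∩ F j).Nonempty) → (⋂ i ∈ s, F i).Nonempty := by
  induction hs using Finset.Nonempty.cons_induction with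
  | singleton a => intro F _ hF; simpa using hF a (by simp) a (by simp)
  | cons a s ha hs ih =>
    intro F hconn hF
    have hconn' : ∀ i ∈ s, (T.induce (F i)).Connected := fun i hi => hconn i (by simp [hi])
    have hF' : ∀ i ∈ s, ∀ j ∈ s, (F i ∩ F j).Nonempty := fun i hi j hj =>
      hF i (by simp [hi]) j (by simp [hj])
    have hFa : ∀ i ∈ s, (F i ∩ F a).Nonempty := fun i hi => hF i (by simp [hi]) a (by simp)
    obtain ⟨x, hx⟩ := ih (F := fun i => F i ∩ F a)
      (fun i hi => hT.induce_inter_connected (hconn' i hi) (hconn a (by simp)) (hFa i hi))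
      (fun i hi j hj => by
        obtain ⟨z, ⟨hzi, hzj⟩, hza⟩ := hT.inter_inter_nonempty (hconn' i hi) (hconn' j hj)
          (hconn a (by simp)) (hF' i hi j hj) (hFa i hi) (hFa j hj)
        exact ⟨z, ⟨hzi, hza⟩, hzj, hza⟩)
    simp only [Set.mem_iInter] at hx
    obtain ⟨i₀, hi₀⟩ := hs
    refine ⟨x, Set.mem_iInter₂.mpr fun i hi => ?_⟩
    rcases Finset.mem_cons.mp hi with rfl | hi
    · exact (hx i₀ hi₀).2
    · exact (hx i hi).1

theorem exists_adj_forall_mem {S : Set W} {X : W} (hT : T.IsTree)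
    (hS : (T.induce S).Connected) (hX : X ∉ S) :
    ∃ Y, T.Adj X Y ∧
      ∀ s : Set W, (T.induce s).Connected → X ∈ s → (s ∩ S).Nonempty → Y ∈ s := by
  classical
  obtain ⟨⟨z, hz⟩⟩ := hS.nonempty
  have hXz : X ≠ z := fun h => hX (h ▸ hz)
  refine ⟨(hT.path X z).snd, (hT.path X z).adj_snd (Walk.not_nil_of_ne hXz), ?_⟩
  rintro s hs hXs ⟨w, hws, hwS⟩
  obtain ⟨m, hXw, hwz, hXz'⟩ := hT.exists_median X w z
  have hmX : X ≠ m := fun h => hX (h ▸ hT.mem_of_mem_support_path hS hwS hz hwz)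
  have hms : m ∈ s := hT.mem_of_mem_support_path hs hXs hws hXw
  set q := hT.path X m
  have hq : q = (hT.path X z).takeUntil m hXz' :=
    (hT.eq_path ((hT.path_isPath X z).takeUntil hXz')).symm
  have hqsnd : q.snd ∈ (hT.path X z).support :=
    (hT.path X z).support_takeUntil_subset_support hXz' (hq ▸ q.getVert_mem_support 1)
  rw [← hT.isAcyclic.eq_snd_of_adj_start (hT.path_isPath X z)
    (q.adj_snd (Walk.not_nil_of_ne hmX)) hqsnd]
  exact hT.mem_of_mem_support_path hs hXs hms (q.getVert_mem_support 1)

end IsTree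

end SimpleGraph

namespace TreeModel

open SimpleGraph

variable {V : Type} {G : SimpleGraph V} (M : TreeModel G)

def bag (X : M.W) : Set V := {u | X ∈ M.sub u}

theorem isClique_bag (X : M.W) : G.IsClique (M.bag X) :=
  fun u hu v hv huv => (M.adj_iff u v huv).mpr ⟨X, hu, hv⟩

theorem mem_bag_of_mem_support {u : V} {X X' Z : M.W} {p : M.T.Walk X X'} (hp : p.IsPath)
    (hX : u ∈ M.bag X) (hX' : u ∈ M.bag X') (hZ : Z ∈ p.support) : u ∈ M.bag Z :=
  M.tree.mem_of_mem_support_path (M.sub_conn u) hX hX' (M.tree.eq_path hp ▸ hZ)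

theorem exists_bag_eq [Finite V] {C : Set V} (hC : IsMaxClique G C) : ∃ X, M.bag X = C := by
  suffices ∃ X, C ⊆ M.bag X from this.imp fun X hX => hC.2 _ (M.isClique_bag X) hX
  have hfin : C.Finite := C.toFinite
  rcases C.eq_empty_or_nonempty with rfl | hCne
  · exact ⟨Classical.choice M.tree.connected.nonempty, Set.empty_subset _⟩
  obtain ⟨X, hX⟩ := M.tree.helly (hfin.toFinset_nonempty.mpr hCne)
    (fun u _ => M.sub_conn u) fun u hu v hv => by
      rw [Set.Finite.mem_toFinset] at hu hv
      obtain rfl | huv := eq_or_ne u v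
      · simpa using M.sub_nonempty u
      · exact (M.adj_iff u v huv).mp (hC.1 hu hv huv)
  exact ⟨X, fun u hu => Set.mem_iInter₂.mp hX u (hfin.mem_toFinset.mpr hu)⟩

theorem exists_adj_bag_subset {S : Set M.W} {X : M.W} (hS : (M.T.induce S).Connected)
    (hX : X ∉ S) (hmeet : ∀ u ∈ M.bag X, (M.sub u ∩ S).Nonempty) :
    ∃ Y, M.T.Adj X Y ∧ M.bag X ⊆ M.bag Y := by
  obtain ⟨Y, hXY, hY⟩ := M.tree.exists_adj_forall_mem hS hX
  exact ⟨Y, hXY, fun u hu => hY _ (M.sub_conn u) hu (hmeet u hu)⟩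

def contractGraph (X Y : M.W) : SimpleGraph V :=
  fromRel fun u v => (contractSub M X Y u ∩ contractSub M X Y v).Nonempty

section Contraction

variable {M} {X Y : M.W}

open Classical in
noncomputable def contractMap (hXY : M.T.Adj X Y) (w : M.W) : {w : M.W // w ≠ Y} :=
  if h : w = Y then ⟨X, hXY.ne⟩ else ⟨w, h⟩

theorem contractMap_of_ne (hXY : M.T.Adj X Y) {w : M.W} (hw : w ≠ Y) :
    contractMap hXY w = ⟨w, hw⟩ :=
  dif_neg hw

theorem contractMap_self (hXY : M.T.Adj X Y) : contractMap hXY Y = ⟨X, hXY.ne⟩ := dif_pos rfl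

theorem contractMap_surjective (hXY : M.T.Adj X Y) : (contractMap hXY).Surjective :=
  fun w => ⟨w, contractMap_of_ne hXY w.2⟩

theorem contractMap_adj_or_eq (hXY : M.T.Adj X Y) {a b : M.W} (hab : M.T.Adj a b) :
    (contractT M X Y).Adj (contractMap hXY a) (contractMap hXY b) ∨
      contractMap hXY a = contractMap hXY b := by
  unfold contractMap
  split_ifs with ha hb hb
  · exact absurd (ha.trans hb.symm) hab.ne
  all_goals
    simp only [contractT, fromRel_adj, ne_eq, Subtype.mk.injEq]
    subst_vars
    have := hab.ne
    tauto

theorem eq_or_of_contractMap_eq (hXY : M.T.Adj X Y) {a b : M.W}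
    (h : contractMap hXY a = contractMap hXY b) :
    a = b ∨ ((a = X ∨ a = Y) ∧ (b = X ∨ b = Y)) := by
  unfold contractMap at h
  split_ifs at h with ha hb hb <;> simp_all

theorem contractSub_eq_image (hXY : M.T.Adj X Y) (u : V) :
    contractSub M X Y u = contractMap hXY '' M.sub u := by
  ext w
  constructor
  · rintro (hw | ⟨hwX, hY⟩)
    · exact ⟨w, hw, contractMap_of_ne hXY w.2⟩
    · exact ⟨Y, hY, by rw [contractMap_self]; exact Subtype.ext hwX.symm⟩
  · rintro ⟨z, hz, rfl⟩
    by_cases hzY : z = Y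
    · subst hzY
      exact Or.inr ⟨by rw [contractMap_self], hz⟩
    · rw [contractMap_of_ne hXY hzY]
      exact Or.inl hz

theorem contractT_connected (hXY : M.T.Adj X Y) : (contractT M X Y).Connected :=
  M.tree.connected.map_of_adj_or_eq (fun _ _ => contractMap_adj_or_eq hXY)
    (contractMap_surjective hXY)

theorem mk_mem_image_contractMap (hXY : M.T.Adj X Y) {a b : {w : M.W // w ≠ Y}} (hab : a ≠ b)
    (h : M.T.Adj a b ∨ (a.1 = X ∧ M.T.Adj Y b)) :
    s(a, b) ∈ Sym2.map (contractMap hXY) '' (M.T.edgeSet \ {s(X, Y)}) := by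
  rcases h with h | ⟨haX, h⟩
  · refine ⟨s(a.1, b.1), ⟨h, fun he => ?_⟩, ?_⟩
    · rcases Sym2.eq_iff.mp he with ⟨-, hb⟩ | ⟨ha, -⟩
      exacts [b.2 hb, a.2 ha]
    · simp [contractMap_of_ne hXY a.2, contractMap_of_ne hXY b.2]
  · refine ⟨s(Y, b.1), ⟨h, fun he => ?_⟩, ?_⟩
    · rcases Sym2.eq_iff.mp he with ⟨-, hb⟩ | ⟨-, hb⟩
      exacts [b.2 hb, hab (Subtype.ext (haX.trans hb.symm))]
    · simp only [Sym2.map_mk, contractMap_self, contractMap_of_ne hXY b.2]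
      rw [show (⟨X, hXY.ne⟩ : {w : M.W // w ≠ Y}) = a from Subtype.ext haX.symm]

theorem edgeSet_contractT_subset (hXY : M.T.Adj X Y) :
    (contractT M X Y).edgeSet ⊆ Sym2.map (contractMap hXY) '' (M.T.edgeSet \ {s(X, Y)}) := by
  intro e he
  induction e using Sym2.ind with
  | h a b =>
  obtain ⟨hab, h | h⟩ := (fromRel_adj _ a b).mp (show (contractT M X Y).Adj a b from he)
  · rcases h with h | h | ⟨hbX, h⟩
    · exact mk_mem_image_contractMap hXY hab (.inl h)
    · exact mk_mem_image_contractMap hXY hab (.inr h)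
    · exact Sym2.eq_swap (a := a) ▸
        mk_mem_image_contractMap hXY hab.symm (.inr ⟨hbX, h.symm⟩)
  · rcases h with h | h | ⟨haX, h⟩
    · exact mk_mem_image_contractMap hXY hab (.inl h.symm)
    · exact Sym2.eq_swap (a := a) ▸ mk_mem_image_contractMap hXY hab.symm (.inr h)
    · exact mk_mem_image_contractMap hXY hab (.inr ⟨haX, h.symm⟩)

theorem contractT_isTree (hXY : M.T.Adj X Y) : (contractT M X Y).IsTree := by
  have := M.finW
  have hconn := contractT_connected hXY
  refine isTree_iff_connected_and_card.mpr
    ⟨hconn, le_antisymm ?_ hconn.card_vert_le_card_edgeSet_add_one⟩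
  -- The contraction has one vertex less and at most one edge less than the tree.
  have hE := (isTree_iff_connected_and_card.mp M.tree).2
  have hW : Nat.card {w : M.W // w ≠ Y} + 1 = Nat.card M.W := Nat.card_subtype_ne_add_one Y
  have hE' : Nat.card (contractT M X Y).edgeSet + 1 ≤ Nat.card M.T.edgeSet := by
    simp only [Nat.card_coe_set_eq]
    calc (contractT M X Y).edgeSet.ncard + 1
        ≤ (Sym2.map (contractMap hXY) '' (M.T.edgeSet \ {s(X, Y)})).ncard + 1 :=
          Nat.add_le_add_right
            (Set.ncard_le_ncard (edgeSet_contractT_subset hXY) (Set.toFinite _)) 1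
      _ ≤ (M.T.edgeSet \ {s(X, Y)}).ncard + 1 :=
          Nat.add_le_add_right (Set.ncard_image_le (Set.toFinite _)) 1
      _ = M.T.edgeSet.ncard :=
          Set.ncard_sdiff_singleton_add_one (show s(X, Y) ∈ M.T.edgeSet from hXY)
  omega

theorem contractSub_connected (hXY : M.T.Adj X Y) (u : V) :
    ((contractT M X Y).induce (contractSub M X Y u)).Connected := by
  rw [contractSub_eq_image hXY]
  exact (M.sub_conn u).map_of_adj_or_eq (f := Set.imageFactorization (contractMap hXY) _)
    (fun _ _ hab => (contractMap_adj_or_eq hXY hab).imp id Subtype.ext)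
    Set.imageFactorization_surjective

def contract (hXY : M.T.Adj X Y) : TreeModel (M.contractGraph X Y) where
  W := {w : M.W // w ≠ Y}
  finW := have := M.finW; inferInstance
  T := contractT M X Y
  tree := contractT_isTree hXY
  sub := contractSub M X Y
  sub_nonempty u := contractSub_eq_image hXY u ▸ (M.sub_nonempty u).image _
  sub_conn := contractSub_connected hXY
  adj_iff u v huv := by
    rw [contractGraph, fromRel_adj, Set.inter_comm (contractSub M X Y v), or_self]
    exact and_iff_right huv

theorem card_contract_lt (hXY : M.T.Adj X Y) : Nat.card (M.contract hXY).W < Nat.card M.W := by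
  have := M.finW
  have := Nat.card_subtype_ne_add_one Y
  change Nat.card {w : M.W // w ≠ Y} < _
  omega

theorem contractGraph_eq_of_isClique (hXY : M.T.Adj X Y)
    (hcl : G.IsClique (M.bag X ∪ M.bag Y)) : M.contractGraph X Y = G := by
  ext u v
  obtain rfl | huv := eq_or_ne u v
  · simp
  rw [(M.contract hXY).adj_iff u v huv, M.adj_iff u v huv]
  change (contractSub M X Y u ∩ contractSub M X Y v).Nonempty ↔ _
  rw [contractSub_eq_image hXY, contractSub_eq_image hXY]
  constructor
  · rintro ⟨_, ⟨a, ha, rfl⟩, b, hb, hba⟩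
    rcases eq_or_of_contractMap_eq hXY hba with rfl | ⟨hb', ha'⟩
    · exact ⟨b, ha, hb⟩
    have hu : u ∈ M.bag X ∪ M.bag Y := by rcases ha' with rfl | rfl; exacts [.inl ha, .inr ha]
    have hv : v ∈ M.bag X ∪ M.bag Y := by rcases hb' with rfl | rfl; exacts [.inl hb, .inr hb]
    exact (M.adj_iff u v huv).mp (hcl hu hv huv)
  · rintro ⟨w, hwu, hwv⟩
    exact ⟨_, ⟨w, hwu, rfl⟩, w, hwv, rfl⟩

end Contraction

theorem exists_card_eq_of_eq {G' : SimpleGraph V} (h : G = G') (M : TreeModel G) :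
    ∃ M' : TreeModel G', Nat.card M'.W = Nat.card M.W := by
  subst h
  exact ⟨M, rfl⟩

theorem contractGraph_ne_of_minimal (hM : ∀ M' : TreeModel G, Nat.card M.W ≤ Nat.card M'.W)
    {X Y : M.W} (hXY : M.T.Adj X Y) : M.contractGraph X Y ≠ G := fun h => by
  obtain ⟨M', hM'⟩ := exists_card_eq_of_eq h (M.contract hXY)
  have := hM M'
  have := M.card_contract_lt hXY
  omega

section NoContractibleEdge

variable {M} (hM : ∀ X Y, M.T.Adj X Y → M.contractGraph X Y ≠ G)
include hM

theorem not_bag_subset_of_adj {X Y : M.W} (hXY : M.T.Adj X Y) : ¬M.bag X ⊆ M.bag Y := fun h =>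
  hM X Y hXY <| M.contractGraph_eq_of_isClique hXY <| by
    rw [Set.union_eq_self_of_subset_left h]
    exact M.isClique_bag Y

theorem isMaxClique_bag (X : M.W) : IsMaxClique G (M.bag X) := by
  refine ⟨M.isClique_bag X, fun D hD hXD => ?_⟩
  by_contra hne
  obtain ⟨v, hvD, hvX⟩ := Set.exists_of_ssubset (hXD.ssubset_of_ne (Ne.symm hne))
  obtain ⟨Y, hXY, hsub⟩ := M.exists_adj_bag_subset (M.sub_conn v) hvX fun u hu =>
    have huv : u ≠ v := fun h => hvX (h ▸ hu)
    (M.adj_iff u v huv).mp (hD (hXD hu) hvD huv)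
  exact not_bag_subset_of_adj hM hXY hsub

theorem bag_injective : Function.Injective M.bag := by
  intro X X' h
  by_contra hne
  have hS : (M.T.induce {X'}).Connected :=
    (connected_iff _).mpr ⟨.of_subsingleton, inferInstance⟩
  obtain ⟨Y, hXY, hsub⟩ := M.exists_adj_bag_subset hS hne fun u hu =>
    ⟨X', (h ▸ hu : u ∈ M.bag X'), rfl⟩
  exact not_bag_subset_of_adj hM hXY hsub

theorem bijOn_bag [Finite V] : Set.BijOn M.bag Set.univ {C | IsMaxClique G C} :=
  ⟨fun X _ => isMaxClique_bag hM X, (bag_injective hM).injOn,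
    fun _ hC => (M.exists_bag_eq hC).imp fun _ hX => ⟨trivial, hX⟩⟩

end NoContractibleEdge

theorem card_maxCliques_le [Finite V] : Nat.card (MaxCliques G) ≤ Nat.card M.W := by
  have := M.finW
  choose f hf using fun C : MaxCliques G => M.exists_bag_eq C.2
  exact Nat.card_le_card_of_injective f fun C C' h => Subtype.ext (by rw [← hf, h, hf])

section BijOn

variable {M} (hM : Set.BijOn M.bag Set.univ {C | IsMaxClique G C})
include hM

theorem card_le_of_bijOn_bag [Finite V] (M' : TreeModel G) : Nat.card M.W ≤ Nat.card M'.W :=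
  calc Nat.card M.W = Nat.card (Set.univ : Set M.W) := Nat.card_univ.symm
    _ = Nat.card (MaxCliques G) := Nat.card_congr (hM.equiv _)
    _ ≤ Nat.card M'.W := M'.card_maxCliques_le

theorem exists_cliqueTree_of_bijOn_bag :
    ∃ (CT : CliqueTree G) (φ : M.T ≃g CT.T), ∀ u, φ '' M.sub u = cliqueSub G u := by
  let e : M.W ≃ MaxCliques G := Equiv.ofBijective (fun X => ⟨M.bag X, hM.mapsTo trivial⟩)
    ⟨fun X X' h => hM.injOn trivial trivial (congrArg Subtype.val h),
      fun C => (hM.surjOn C.2).imp fun _ hX => Subtype.ext hX.2⟩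
  let φ := Iso.map e M.T
  have hbag (C : MaxCliques G) : M.bag (e.symm C) = C.1 :=
    congrArg Subtype.val (e.apply_symm_apply C)
  refine ⟨⟨M.T.map e.toEmbedding, φ.isTree_iff.mp M.tree, fun C C' p hp C'' hC'' u hu => ?_⟩,
    φ, fun u => ?_⟩
  · rw [← hbag C'']
    refine M.mem_bag_of_mem_support (hp.map (f := φ.symm.toHom) φ.symm.injective)
      (show u ∈ M.bag (e.symm C) by rw [hbag]; exact hu.1)
      (show u ∈ M.bag (e.symm C') by rw [hbag]; exact hu.2) ?_
    rw [Walk.support_map]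
    exact List.mem_map_of_mem hC''
  · ext C
    constructor
    · rintro ⟨X, hX, rfl⟩
      exact hX
    · intro hC
      exact ⟨e.symm C, show u ∈ M.bag _ by rw [hbag]; exact hC, e.apply_symm_apply C⟩

end BijOn

theorem bijOn_bag_of_exists_cliqueTree
    (h : ∃ (CT : CliqueTree G) (φ : M.T ≃g CT.T), ∀ u, φ '' M.sub u = cliqueSub G u) :
    Set.BijOn M.bag Set.univ {C | IsMaxClique G C} := by
  obtain ⟨CT, φ, himg⟩ := h
  have hbag (X : M.W) : M.bag X = (φ X).1 := by
    ext u
    change X ∈ M.sub u ↔ φ X ∈ cliqueSub G u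
    rw [← himg u, φ.injective.mem_set_image]
  refine ⟨fun X _ => hbag X ▸ (φ X).2, fun X _ X' _ h => φ.injective ?_, fun C hC => ?_⟩
  · exact Subtype.ext (by rw [← hbag, ← hbag, h])
  · exact ⟨φ.symm ⟨C, hC⟩, trivial, by rw [hbag, RelIso.apply_symm_apply]⟩

end TreeModel

/-- Fact 1: for a tree model `𝒯 = (T, {T_u})` of a chordal graph `G`, the following are
equivalent: (i) `𝒯` is a minimal tree model of `G`; (ii) `𝒯` is isomorphic to the tree
model defined by some clique tree of `G`; (iii) contracting any edge `XY` of `T` (in `T`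
and in all subtrees containing it) yields a tree model of a graph different from `G`;
(iv) `ψ : X ↦ {u | X ∈ V(T_u)}` is a bijection between the nodes of `T` and the maximal
cliques of `G`. -/
theorem stmt1 {V : Type} [Fintype V] (G : SimpleGraph V) (M : TreeModel G) :
    List.TFAE [
      -- (i) minimality of the tree model
      (∀ M' : TreeModel G, Nat.card M.W ≤ Nat.card M'.W),
      -- (ii) isomorphic to the tree model defined by some clique tree
      (∃ (CT : CliqueTree G) (φ : M.T ≃g CT.T), ∀ u, (⇑φ) '' (M.sub u) = cliqueSub G u),
      -- (iii) contracting any edge yields a tree model of a graph `G' ≠ G`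
      (∀ X Y : M.W, M.T.Adj X Y →
        SimpleGraph.fromRel
          (fun u v : V => ((contractSub M X Y u) ∩ (contractSub M X Y v)).Nonempty) ≠ G),
      -- (iv) `ψ` is a bijection onto the maximal cliques of `G`
      (Set.BijOn (fun X : M.W => {u : V | X ∈ M.sub u}) Set.univ {C | IsMaxClique G C})
    ] := by
  tfae_have 1 → 3 := fun h X Y => M.contractGraph_ne_of_minimal h
  tfae_have 3 → 4 := fun h => TreeModel.bijOn_bag h
  tfae_have 4 → 1 := fun h => TreeModel.card_le_of_bijOn_bag h
  tfae_have 4 → 2 := TreeModel.exists_cliqueTree_of_bijOn_bag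
  tfae_have 2 → 4 := M.bijOn_bag_of_exists_cliqueTree
  tfae_finish
end

section
/- Let C_1, …, C_m be subsets of {v_1, …, v_n} and suppose there exist distinct indices i, i⁺ such that v_{i⁺} ∈ C_j for every j with v_i ∈ C_j. Let the reduced instance consist of those clauses C_j with v_i ∉ C_j, over the variable set {v_1, …, v_n} \ {v_i}. Then the original instance has a solution if and only if the reduced instance has a solution. More precisely: if S solves the original instance then S \ {v_i} solves the reduced instance; and if S solves the reduced instance, then S solves the original instance when v_{i⁺} ∈ S, and S ∪ {v_i} solves the original instance when v_{i⁺} ∉ S. -/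
/-!
Every clause containing `v_i` also contains `v_{i⁺}`, so giving `v_i` the value opposite to
`v_{i⁺}` splits all of these clauses, whatever the rest of the assignment; the remaining clauses
do not see `v_i` at all. Hence `v_i` and its clauses can be dropped and restored freely.
-/

/-- A solution of a (monotone) NOT-ALL-EQUAL instance with clauses `C j`:
a set `S` meeting every clause and missing part of every clause. -/
def IsNAESolution {n m : ℕ} (C : Fin m → Set (Fin n)) (S : Set (Fin n)) : Prop :=
  ∀ j, (C j ∩ S).Nonempty ∧ (C j \ S).Nonempty

namespace Set

variable {α : Type*}

def Splits (c S : Set α) : Prop :=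
  (c ∩ S).Nonempty ∧ (c \ S).Nonempty

variable {c S : Set α} {i i' : α}

theorem Splits.diff_singleton (h : Splits c S) (hi : i ∉ c) : Splits c (S \ {i}) := by
  obtain ⟨⟨x, hxc, hxS⟩, ⟨y, hyc, hyS⟩⟩ := h
  exact ⟨⟨x, hxc, hxS, fun hxi => hi (hxi ▸ hxc)⟩, ⟨y, hyc, fun hy => hyS hy.1⟩⟩

theorem Splits.union_singleton (h : Splits c S) (hi : i ∉ c) : Splits c (S ∪ {i}) := by
  obtain ⟨⟨x, hxc, hxS⟩, ⟨y, hyc, hyS⟩⟩ := h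
  refine ⟨⟨x, hxc, Or.inl hxS⟩, ⟨y, hyc, ?_⟩⟩
  rintro (hy | hyi)
  · exact hyS hy
  · exact hi (hyi ▸ hyc)

theorem splits_of_dominated (hdom : i ∈ c → i' ∈ c) (hiS : i ∉ S) (hi'S : i' ∈ S)
    (hS : i ∉ c → Splits c S) : Splits c S := by
  by_cases hic : i ∈ c
  · exact ⟨⟨i', hdom hic, hi'S⟩, ⟨i, hic, hiS⟩⟩
  · exact hS hic

theorem splits_union_singleton_of_dominated (hne : i ≠ i') (hdom : i ∈ c → i' ∈ c)
    (hi'S : i' ∉ S) (hS : i ∉ c → Splits c S) : Splits c (S ∪ {i}) := by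
  by_cases hic : i ∈ c
  · refine ⟨⟨i, hic, Or.inr rfl⟩, ⟨i', hdom hic, ?_⟩⟩
    rintro (hi' | hi'i)
    · exact hi'S hi'
    · exact hne hi'i.symm
  · exact (hS hic).union_singleton hic

end Set

open Set

/-- Suppose there are distinct indices `i ≠ i'` such that `v_{i'} ∈ C_j` whenever
`v_i ∈ C_j`. Form the reduced instance by removing the variable `v_i` and all clauses
containing it (a solution of the reduced instance is a set avoiding `v_i` which is a
NAE-solution for all clauses not containing `v_i`). Then the original instance has a
solution iff the reduced one does; more precisely, if `S` solves the original instance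
then `S \ {i}` solves the reduced one, and if `S` solves the reduced one then `S` solves
the original instance when `i' ∈ S`, and `S ∪ {i}` solves it when `i' ∉ S`. -/
theorem stmt9 {n m : ℕ} (C : Fin m → Set (Fin n)) (i i' : Fin n) (hne : i ≠ i')
    (hdom : ∀ j, i ∈ C j → i' ∈ C j) :
    ((∃ S, IsNAESolution C S) ↔
      (∃ S, i ∉ S ∧ ∀ j, i ∉ C j → (C j ∩ S).Nonempty ∧ (C j \ S).Nonempty)) ∧
    (∀ S, IsNAESolution C S →
      (i ∉ S \ {i} ∧ ∀ j, i ∉ C j →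
        (C j ∩ (S \ {i})).Nonempty ∧ (C j \ (S \ {i})).Nonempty)) ∧
    (∀ S, i ∉ S → (∀ j, i ∉ C j → (C j ∩ S).Nonempty ∧ (C j \ S).Nonempty) →
      ((i' ∈ S → IsNAESolution C S) ∧
       (i' ∉ S → IsNAESolution C (S ∪ {i})))) := by
  have restrict (S : Set (Fin n)) (hS : IsNAESolution C S) :
      i ∉ S \ {i} ∧ ∀ j, i ∉ C j → Splits (C j) (S \ {i}) :=
    ⟨fun hi => hi.2 rfl, fun j hij => Splits.diff_singleton (hS j) hij⟩
  have extend (S : Set (Fin n)) (hiS : i ∉ S) (hS : ∀ j, i ∉ C j → Splits (C j) S) :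
      (i' ∈ S → IsNAESolution C S) ∧ (i' ∉ S → IsNAESolution C (S ∪ {i})) :=
    ⟨fun hi'S j => splits_of_dominated (hdom j) hiS hi'S (hS j),
      fun hi'S j => splits_union_singleton_of_dominated hne (hdom j) hi'S (hS j)⟩
  refine ⟨⟨fun ⟨S, hS⟩ => ⟨S \ {i}, restrict S hS⟩, fun ⟨S, hiS, hS⟩ => ?_⟩, restrict, extend⟩
  by_cases hi'S : i' ∈ S
  · exact ⟨S, (extend S hiS hS).1 hi'S⟩
  · exact ⟨S ∪ {i}, (extend S hiS hS).2 hi'S⟩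
end

section
/- Let G be a chordal graph, let T* be a clique tree of G, let F = Ee(T*), and let G' be the graph with V(G') = V(G) ∪ {v_e : e ∈ F} and E(G') = E(G) ∪ {u v_e : e = CC' ∈ F, u ∈ C ∪ C'} ∪ {v_e v_{e'} : e, e' ∈ F share an endpoint}. Let T' be a clique tree of G' with |L(T')| = ℓ(G'), and let T be obtained from T' by renaming each node C' of T' to C' ∩ V(G). Then T is a clique tree of G, F ⊆ E(T), Hh(T) = Hh(T*), Ee(T) = Ee(T*) = F, and |L(T)| = |L(T*)|. -/
open SimpleGraph

/-- The auxiliary graph `G'` obtained from `G` and the edge set `F = Ee(T*)` of a clique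
tree `T*` of `G`: a new vertex `v_e` is added for each edge `e ∈ F`; `v_e` is adjacent to
all vertices of the two endpoints (maximal cliques) of `e`, and to all `v_{e'}` where `e`
and `e'` share an endpoint. -/
def Gprime {V : Type} (G : SimpleGraph V) (CT : CliqueTree G) :
    SimpleGraph (V ⊕ {e : Sym2 (MaxCliques G) // e ∈ Ee CT.T}) :=
  SimpleGraph.fromRel (fun a b =>
    match a, b with
    | Sum.inl u, Sum.inl v => G.Adj u v
    | Sum.inl u, Sum.inr e => ∃ D ∈ e.1, u ∈ D.1
    | Sum.inr e, Sum.inl u => ∃ D ∈ e.1, u ∈ D.1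
    | Sum.inr e, Sum.inr e' => ∃ D, D ∈ e.1 ∧ D ∈ e'.1)

/-- The map `φ(C) = C ∪ {v_e : C is an endpoint of e}` from sets of vertices of `G` to
sets of vertices of `G'`. -/
def phiMap {V : Type} (G : SimpleGraph V) (CT : CliqueTree G) (Cset : Set V) :
    Set (V ⊕ {e : Sym2 (MaxCliques G) // e ∈ Ee CT.T}) :=
  Sum.inl '' Cset ∪ Sum.inr '' {e | ∃ D ∈ e.1, D.1 = Cset}

/-- The tree `T` obtained from a clique tree `T'` of `G'` by renaming each node `C'` to
`C' ∩ V(G)` (two renamed nodes are adjacent iff some pair of preimages is adjacent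
in `T'`). -/
def renameT {V : Type} (G : SimpleGraph V) (CT : CliqueTree G)
    (CT' : CliqueTree (Gprime G CT)) : SimpleGraph (MaxCliques G) :=
  SimpleGraph.fromRel (fun D E =>
    ∃ D' E' : MaxCliques (Gprime G CT),
      CT'.T.Adj D' E' ∧ {u : V | Sum.inl u ∈ D'.1} = D.1 ∧ {u : V | Sum.inl u ∈ E'.1} = E.1)

/-!
The maximal cliques of `G'` are exactly the sets `φ(C) = C ∪ {v_e : C ∈ e}` for the maximal
cliques `C` of `G`: two vertices `v_e, v_f` in a clique force `e` and `f` to share an endpoint,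
and since a tree has no triangles all such edges then pass through one node. Hence renaming is an
isomorphism from `T'` onto `T`, so `T` is a clique tree of `G` with `|L(T)| = |L(T')| = ℓ(G')`;
and for `e = CC' ∈ F` the only nodes of `T'` containing `v_e` are `φ(C)` and `φ(C')`, so `e`
is an edge of `T`. Placing each `v_e` on the edge `e` of `T*` gives a tree model of `G'`, whence
`|L(T)| ≤ |L(T*)|`. Finally, a finite tree with at least two nodes has
`|L| = 2 + ∑ (deg v - 2)⁺` leaves; every branch node of `T*` keeps its `T*`-edges in `T`, so
comparing the two sums forces `T` and `T*` to agree around every branch node.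
-/

namespace SimpleGraph

variable {N : Type*} {S S' : SimpleGraph N}

lemma deg_eq_degree (S : SimpleGraph N) (v : N) [Fintype (S.neighborSet v)] :
    deg S v = S.degree v := by
  rw [deg, Set.ncard_eq_toFinset_card', Set.toFinset_card, card_neighborSet_eq_degree]

lemma deg_eq_zero [Subsingleton N] (S : SimpleGraph N) (v : N) : deg S v = 0 := by
  simp [deg]

lemma numLeaves_eq_zero [Subsingleton N] (S : SimpleGraph N) : numLeaves S = 0 := by
  simp [numLeaves, leaves, deg_eq_zero]

/-- `deg S v - 2` is truncated subtraction: leaves and degree-two nodes contribute `0`. -/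
lemma IsTree.numLeaves_eq_sum [Fintype N] [Nontrivial N] (hS : S.IsTree) :
    numLeaves S = ∑ v, (deg S v - 2) + 2 := by
  classical
  have hleaves : numLeaves S = ∑ v, if deg S v = 1 then 1 else 0 := by
    rw [Finset.sum_boole, numLeaves, ← Set.ncard_coe_finset]
    simp [leaves]
  have hpointwise : ∀ v, (deg S v - 2) + 2 = deg S v + if deg S v = 1 then 1 else 0 := by
    intro v
    have := deg_eq_degree S v ▸ hS.connected.preconnected.degree_pos_of_nontrivial v
    split_ifs <;> omega
  have hsum : ∑ v, deg S v + 2 = 2 * Fintype.card N := by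
    simp only [deg_eq_degree]
    rw [sum_degrees_eq_twice_card_edges, ← hS.card_edgeFinset]
    ring
  have := Finset.sum_congr rfl fun v (_ : v ∈ Finset.univ) => hpointwise v
  rw [Finset.sum_add_distrib, Finset.sum_add_distrib, Finset.sum_const, Finset.card_univ,
    smul_eq_mul] at this
  omega

lemma IsTree.deg_sub_two_eq_of_numLeaves_le [Finite N] (hS : S.IsTree) (hS' : S'.IsTree)
    (hdeg : ∀ v, deg S' v - 2 ≤ deg S v - 2) (hle : numLeaves S ≤ numLeaves S') (v : N) :
    deg S v - 2 = deg S' v - 2 := by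
  cases subsingleton_or_nontrivial N with
  | inl _ => simp [deg_eq_zero]
  | inr _ =>
    have := Fintype.ofFinite N
    rw [hS.numLeaves_eq_sum, hS'.numLeaves_eq_sum] at hle
    have hsum := le_antisymm (Finset.sum_le_sum (s := Finset.univ) fun v _ => hdeg v) (by omega)
    exact ((Finset.sum_eq_sum_iff_of_le fun v _ => hdeg v).mp hsum v (Finset.mem_univ v)).symm

lemma IsTree.numLeaves_eq_of_deg_sub_two_eq [Finite N] (hS : S.IsTree) (hS' : S'.IsTree)
    (h : ∀ v, deg S v - 2 = deg S' v - 2) : numLeaves S = numLeaves S' := by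
  cases subsingleton_or_nontrivial N with
  | inl _ => simp [numLeaves_eq_zero]
  | inr _ =>
    have := Fintype.ofFinite N
    rw [hS.numLeaves_eq_sum, hS'.numLeaves_eq_sum, Finset.sum_congr rfl fun v _ => h v]

lemma Ee_eq_of_neighborSet_eq (hH : Hh S = Hh S')
    (hN : ∀ v ∈ Hh S', S.neighborSet v = S'.neighborSet v) : Ee S = Ee S' := by
  ext e
  induction e using Sym2.ind with | _ a b => ?_
  have ha : a ∈ Hh S' → (S.Adj a b ↔ S'.Adj a b) := fun h => Set.ext_iff.mp (hN a h) b
  have hb : b ∈ Hh S' → (S.Adj a b ↔ S'.Adj a b) := fun h => by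
    rw [S.adj_comm, S'.adj_comm]; exact Set.ext_iff.mp (hN b h) a
  simp only [Ee, Set.mem_ofPred_eq, mem_edgeSet, Sym2.mem_iff, exists_eq_or_imp, exists_eq_left, hH]
  tauto

/-- Branch degrees can only grow from `S'` to `S`, so by `IsTree.numLeaves_eq_sum` having no more
leaves than `S'` forces `S` to agree with `S'` around every branch node. -/
theorem IsTree.Hh_eq_and_Ee_eq_and_numLeaves_eq [Finite N] (hS : S.IsTree) (hS' : S'.IsTree)
    (hE : Ee S' ⊆ S.edgeSet) (hle : numLeaves S ≤ numLeaves S') :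
    Hh S = Hh S' ∧ Ee S = Ee S' ∧ numLeaves S = numLeaves S' := by
  have hnbr : ∀ v ∈ Hh S', S'.neighborSet v ⊆ S.neighborSet v :=
    fun v hv w hw => hE ⟨hw, v, Sym2.mem_mk_left v w, hv⟩
  have hdeg : ∀ v, deg S' v - 2 ≤ deg S v - 2 := by
    intro v
    by_cases hv : v ∈ Hh S'
    · exact Nat.sub_le_sub_right (Set.ncard_le_ncard (hnbr v hv)) 2
    · have : deg S' v < 3 := not_le.mp hv
      omega
  have heq := hS.deg_sub_two_eq_of_numLeaves_le hS' hdeg hle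
  have hH : Hh S = Hh S' := by
    ext v
    have := heq v
    change 3 ≤ deg S v ↔ 3 ≤ deg S' v
    omega
  have hN : ∀ v ∈ Hh S', S.neighborSet v = S'.neighborSet v := by
    intro v hv
    have : 3 ≤ deg S' v := hv
    have := heq v
    exact (Set.eq_of_subset_of_ncard_le (hnbr v hv) (by unfold deg at *; omega)).symm
  exact ⟨hH, Ee_eq_of_neighborSet_eq hH hN, hS.numLeaves_eq_of_deg_sub_two_eq hS' heq⟩

lemma IsAcyclic.not_adj_of_adj_of_adj (hS : S.IsAcyclic) {a b c : N} (hab : S.Adj a b)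
    (hac : S.Adj a c) : ¬S.Adj b c := by
  classical
  exact fun hbc => hS.cliqueFree le_rfl _ (is3Clique_triple_iff.mpr ⟨hab, hac, hbc⟩)

lemma connected_induce_mem_of_mem_edgeSet {W : Type*} {T : SimpleGraph W} {e : Sym2 W}
    (he : e ∈ T.edgeSet) : (T.induce {w | w ∈ e}).Connected := by
  induction e using Sym2.ind with | _ a b => ?_
  have hpair : {w | w ∈ s(a, b)} = {a, b} := by
    ext w
    simp
  exact hpair ▸ induce_pair_connected_of_adj he

lemma Iso.numLeaves_eq {W W' : Type*} {S : SimpleGraph W} {S' : SimpleGraph W'}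
    (f : S ≃g S') : numLeaves S = numLeaves S' := by
  have hdeg : ∀ v, deg S' (f v) = deg S v := fun v => by
    rw [deg, deg, ← Set.ncard_image_of_injective _ f.injective]
    congr 1
    ext w
    obtain ⟨w, rfl⟩ := f.surjective w
    simp [f.injective.mem_set_image, f.map_adj_iff]
  rw [numLeaves, numLeaves, ← Set.ncard_image_of_injective _ f.injective]
  congr 1
  ext w
  obtain ⟨w, rfl⟩ := f.surjective w
  simp [leaves, f.injective.mem_set_image, hdeg]

end SimpleGraph

section MaximalCliques

variable {V : Type*} {G : SimpleGraph V}

lemma exists_maxClique_superset [Finite V] {s : Set V} (hs : G.IsClique s) :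
    ∃ C : MaxCliques G, s ⊆ C.1 := by
  obtain ⟨D, hD, hmax⟩ := Set.Finite.exists_maximalFor id _
    (Set.toFinite {D : Set V | G.IsClique D ∧ s ⊆ D}) ⟨s, hs, subset_rfl⟩
  exact ⟨⟨D, hD.1, fun E hE hDE => (hmax ⟨hE, hD.2.trans hDE⟩ hDE).antisymm hDE⟩, hD.2⟩

lemma adj_iff_exists_maxClique [Finite V] {u v : V} (huv : u ≠ v) :
    G.Adj u v ↔ ∃ C : MaxCliques G, u ∈ C.1 ∧ v ∈ C.1 := by
  refine ⟨fun h => ?_, fun ⟨C, hu, hv⟩ => C.2.1 hu hv huv⟩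
  obtain ⟨C, hC⟩ := exists_maxClique_superset (isClique_pair.mpr fun _ => h)
  exact ⟨C, hC (Set.mem_insert u _), hC (Set.mem_insert_of_mem u rfl)⟩

lemma MaxCliques.eq_of_subset {C D : MaxCliques G} (h : C.1 ⊆ D.1) : C = D :=
  (Subtype.ext (C.2.2 D.1 D.2.1 h)).symm

namespace CliqueTree

variable (CT : CliqueTree G)

lemma inter_subset_of_adj_of_adj {A D B : MaxCliques G} (hAD : CT.T.Adj A D)
    (hDB : CT.T.Adj D B) (hAB : A ≠ B) : A.1 ∩ B.1 ⊆ D.1 :=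
  CT.path_cond A B (.cons hAD (.cons hDB .nil))
    (by simp [Walk.cons_isPath_iff, hAD.ne, hDB.ne, hAB]) D (by simp)

lemma connected_induce_cliqueSub [Finite V] (u : V) :
    (CT.T.induce (cliqueSub G u)).Connected := by
  classical
  obtain ⟨C, hC⟩ := exists_maxClique_superset (G.isClique_singleton u)
  refine induce_connected_of_patches C (hC rfl) fun {D} hD => ?_
  obtain ⟨p, hp⟩ := (CT.tree.connected.preconnected C D).some.toPath
  refine ⟨{E | E ∈ p.support}, fun E hE => CT.path_cond C D p hp E hE ⟨hC rfl, hD⟩,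
    p.start_mem_support, p.end_mem_support, ?_⟩
  exact p.connected_induce_support.preconnected _ _

lemma adj_of_forall_mem_eq_or_eq {C C' : MaxCliques G} (hne : C ≠ C') {x : V}
    (hC : x ∈ C.1) (hC' : x ∈ C'.1)
    (honly : ∀ D : MaxCliques G, x ∈ D.1 → D = C ∨ D = C') :
    CT.T.Adj C C' := by
  classical
  obtain ⟨p, hp⟩ := (CT.tree.connected.preconnected C C').some.toPath
  obtain ⟨D, hCD, q, rfl⟩ := Walk.exists_eq_cons_of_ne hne p
  rcases honly D (CT.path_cond C C' _ hp D (by simp) ⟨hC, hC'⟩) with rfl | rfl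
  · exact absurd rfl hCD.ne
  · exact hCD

lemma subset_or_subset_of_adj [Finite V] {A B : MaxCliques G} (hAB : CT.T.Adj A B)
    {s : Set V} (hs : G.IsClique s) (hsub : s ⊆ A.1 ∪ B.1) : s ⊆ A.1 ∨ s ⊆ B.1 := by
  classical
  by_contra! h
  obtain ⟨u, hus, huA⟩ := Set.not_subset.mp h.1
  obtain ⟨w, hws, hwB⟩ := Set.not_subset.mp h.2
  have huB : u ∈ B.1 := (hsub hus).resolve_left huA
  have hwA : w ∈ A.1 := (hsub hws).resolve_right hwB
  have huw : u ≠ w := by rintro rfl; exact huA hwA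
  obtain ⟨D, huD, hwD⟩ := (adj_iff_exists_maxClique huw).mp (hs hus hws huw)
  obtain ⟨p, hp⟩ := (CT.tree.connected.preconnected D A).some.toPath
  by_cases hB : B ∈ p.support
  · exact hwB (CT.path_cond D A p hp B hB ⟨hwD, hwA⟩)
  · exact huA (CT.path_cond B D (.cons hAB.symm p.reverse) (hp.reverse.cons (by simpa using hB))
      A (by simp) ⟨huB, huD⟩)

end CliqueTree

end MaximalCliques

section Gprime

variable {V : Type} {G : SimpleGraph V} {CT : CliqueTree G}

@[simp] lemma gprime_adj_inl_inl {u v : V} : (Gprime G CT).Adj (.inl u) (.inl v) ↔ G.Adj u v := by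
  simp only [Gprime, fromRel_adj, ne_eq, Sum.inl.injEq, G.adj_comm v u, or_self]
  exact ⟨And.right, fun h => ⟨h.ne, h⟩⟩

@[simp] lemma gprime_adj_inl_inr {u : V} {e : Ee CT.T} :
    (Gprime G CT).Adj (.inl u) (.inr e) ↔ ∃ D ∈ e.1, u ∈ D.1 := by
  simp [Gprime]

@[simp] lemma gprime_adj_inr_inl {u : V} {e : Ee CT.T} :
    (Gprime G CT).Adj (.inr e) (.inl u) ↔ ∃ D ∈ e.1, u ∈ D.1 := by
  simp [Gprime]

@[simp] lemma gprime_adj_inr_inr {e f : Ee CT.T} :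
    (Gprime G CT).Adj (.inr e) (.inr f) ↔ e ≠ f ∧ ∃ D, D ∈ e.1 ∧ D ∈ f.1 := by
  simp only [Gprime, fromRel_adj, ne_eq, Sum.inr.injEq, and_comm (a := _ ∈ f.1), or_self]

@[simp] lemma inl_mem_phiMap {s : Set V} {u : V} : .inl u ∈ phiMap G CT s ↔ u ∈ s := by
  simp [phiMap]

@[simp] lemma inr_mem_phiMap {C : MaxCliques G} {e : Ee CT.T} :
    .inr e ∈ phiMap G CT C.1 ↔ C ∈ e.1 := by
  simp [phiMap, C.2]

variable {X : Set (V ⊕ Ee CT.T)}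

lemma subset_phiMap_iff {C : MaxCliques G} :
    X ⊆ phiMap G CT C.1 ↔
      (∀ u, .inl u ∈ X → u ∈ C.1) ∧ ∀ e, .inr e ∈ X → C ∈ e.1 := by
  simp [Set.subset_def, Sum.forall]

lemma isClique_inl_preimage (hX : (Gprime G CT).IsClique X) : G.IsClique {u | .inl u ∈ X} :=
  fun _ hu _ hv huv => gprime_adj_inl_inl.mp (hX hu hv (by simpa using huv))

lemma mem_or_mem_of_inr_mem (hX : (Gprime G CT).IsClique X) {e : Ee CT.T} (he : .inr e ∈ X)
    {A B : MaxCliques G} (heAB : e.1 = s(A, B)) {u : V} (hu : .inl u ∈ X) :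
    u ∈ A.1 ∨ u ∈ B.1 := by
  simpa [heAB] using hX hu he (by simp)

lemma exists_subset_phiMap_of_forall_inr_eq [Finite V] (hX : (Gprime G CT).IsClique X)
    {f : Ee CT.T} (hf : .inr f ∈ X) (honly : ∀ e, .inr e ∈ X → e = f) :
    ∃ C : MaxCliques G, X ⊆ phiMap G CT C.1 := by
  obtain ⟨A, B, hfAB⟩ : ∃ A B, f.1 = s(A, B) := f.1.ind fun A B => ⟨A, B, rfl⟩
  have hAB : CT.T.Adj A B := by simpa [hfAB] using f.2.1
  have hmem : ∀ C ∈ f.1, {u | .inl u ∈ X} ⊆ C.1 → X ⊆ phiMap G CT C.1 := fun C hC hY =>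
    subset_phiMap_iff.mpr ⟨fun u hu => hY hu, fun e he => honly e he ▸ hC⟩
  rcases CT.subset_or_subset_of_adj hAB (isClique_inl_preimage hX)
    (fun u hu => mem_or_mem_of_inr_mem hX hf hfAB hu) with hA | hB
  · exact ⟨A, hmem A (by simp [hfAB]) hA⟩
  · exact ⟨B, hmem B (by simp [hfAB]) hB⟩

/-- A tree has no triangles, so every edge `e` with `v_e ∈ X` passes through `D`. -/
lemma subset_phiMap_of_inr_mem_of_inr_mem (hX : (Gprime G CT).IsClique X) {f g : Ee CT.T}
    (hf : .inr f ∈ X) (hg : .inr g ∈ X) (hfg : f ≠ g) {D : MaxCliques G} (hDf : D ∈ f.1)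
    (hDg : D ∈ g.1) : X ⊆ phiMap G CT D.1 := by
  obtain ⟨A, hfA⟩ := Sym2.mem_iff_exists.mp hDf
  obtain ⟨B, hgB⟩ := Sym2.mem_iff_exists.mp hDg
  have hDA : CT.T.Adj D A := by simpa [hfA] using f.2.1
  have hDB : CT.T.Adj D B := by simpa [hgB] using g.2.1
  have hAB : A ≠ B := fun h => hfg (Subtype.ext (by rw [hfA, hgB, h]))
  refine subset_phiMap_iff.mpr ⟨fun u hu => ?_, fun e he => ?_⟩
  · by_contra huD
    have huA := (mem_or_mem_of_inr_mem hX hf hfA hu).resolve_left huD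
    have huB := (mem_or_mem_of_inr_mem hX hg hgB hu).resolve_left huD
    exact huD (CT.inter_subset_of_adj_of_adj hDA.symm hDB hAB ⟨huA, huB⟩)
  · by_contra hDe
    have hmem : ∀ {h : Ee CT.T} {A' : MaxCliques G},
        .inr h ∈ X → h.1 = s(D, A') → A' ∈ e.1 := by
      intro h A' hh hhA
      have hne : e ≠ h := by rintro rfl; exact hDe (by simp [hhA])
      obtain ⟨-, E, hEe, hEh⟩ := gprime_adj_inr_inr.mp (hX he hh (by simpa using hne))
      rw [hhA, Sym2.mem_iff] at hEh
      rcases hEh with rfl | rfl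
      · exact absurd hEe hDe
      · exact hEe
    have heAB : e.1 = s(A, B) := (Sym2.mem_and_mem_iff hAB).mp ⟨hmem hf hfA, hmem hg hgB⟩
    exact CT.tree.isAcyclic.not_adj_of_adj_of_adj hDA hDB (by simpa [heAB] using e.2.1)

lemma exists_subset_phiMap [Finite V] (hX : (Gprime G CT).IsClique X) :
    ∃ C : MaxCliques G, X ⊆ phiMap G CT C.1 := by
  by_cases hinr : ∃ f, .inr f ∈ X
  · obtain ⟨f, hf⟩ := hinr
    by_cases hother : ∃ g, .inr g ∈ X ∧ g ≠ f
    · obtain ⟨g, hg, hgf⟩ := hother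
      obtain ⟨-, D, hDg, hDf⟩ := gprime_adj_inr_inr.mp (hX hg hf (by simpa using hgf))
      exact ⟨D, subset_phiMap_of_inr_mem_of_inr_mem hX hf hg hgf.symm hDf hDg⟩
    · push Not at hother
      exact exists_subset_phiMap_of_forall_inr_eq hX hf hother
  · push Not at hinr
    obtain ⟨C, hC⟩ := exists_maxClique_superset (isClique_inl_preimage hX)
    exact ⟨C, subset_phiMap_iff.mpr ⟨fun u hu => hC hu, fun e he => absurd he (hinr e)⟩⟩

lemma isMaxClique_phiMap [Finite V] (C : MaxCliques G) :
    IsMaxClique (Gprime G CT) (phiMap G CT C.1) := by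
  refine ⟨?_, fun X hX hCX => ?_⟩
  · rintro (u | e) hx (v | f) hy hxy <;>
      simp only [inl_mem_phiMap, inr_mem_phiMap, gprime_adj_inl_inl, gprime_adj_inl_inr,
        gprime_adj_inr_inl, gprime_adj_inr_inr, ne_eq, Sum.inl.injEq, Sum.inr.injEq]
        at hx hy hxy ⊢
    · exact C.2.1 hx hy hxy
    · exact ⟨C, hy, hx⟩
    · exact ⟨C, hx, hy⟩
    · exact ⟨hxy, C, hx, hy⟩
  obtain ⟨D, hXD⟩ := exists_subset_phiMap hX
  have hCD : C = D := MaxCliques.eq_of_subset fun u hu =>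
    inl_mem_phiMap.mp (hXD (hCX (inl_mem_phiMap.mpr hu)))
  exact (hCD ▸ hXD).antisymm hCX

lemma exists_eq_phiMap [Finite V] (hX : IsMaxClique (Gprime G CT) X) :
    ∃ C : MaxCliques G, X = phiMap G CT C.1 := by
  obtain ⟨C, hXC⟩ := exists_subset_phiMap hX.1
  exact ⟨C, (hX.2 _ (isMaxClique_phiMap C).1 hXC).symm⟩

end Gprime

section Rename

variable {V : Type} [Finite V] {G : SimpleGraph V} (CT : CliqueTree G)

noncomputable def phiEquiv : MaxCliques G ≃ MaxCliques (Gprime G CT) :=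
  Equiv.ofBijective (fun C => ⟨phiMap G CT C.1, isMaxClique_phiMap C⟩)
    ⟨fun C D h => Subtype.ext <| by
        simpa using congrArg (fun X : MaxCliques _ => {u | .inl u ∈ X.1}) h,
      fun X => (exists_eq_phiMap X.2).imp fun _ h => Subtype.ext h.symm⟩

@[simp] lemma phiEquiv_coe (C : MaxCliques G) : (phiEquiv CT C).1 = phiMap G CT C.1 := rfl

variable {CT}

lemma eq_phiEquiv_of_inl_preimage {D' : MaxCliques (Gprime G CT)} {D : MaxCliques G}
    (h : {u | .inl u ∈ D'.1} = D.1) : D' = phiEquiv CT D := by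
  obtain ⟨C, rfl⟩ := (phiEquiv CT).surjective D'
  congr
  exact Subtype.ext (by simpa using h)

variable (CT' : CliqueTree (Gprime G CT))

lemma renameT_adj_iff {D E : MaxCliques G} :
    (renameT G CT CT').Adj D E ↔ CT'.T.Adj (phiEquiv CT D) (phiEquiv CT E) := by
  rw [renameT, fromRel_adj]
  constructor
  · rintro ⟨-, ⟨D', E', h, hD, hE⟩ | ⟨E', D', h, hE, hD⟩⟩
    · rwa [eq_phiEquiv_of_inl_preimage hD, eq_phiEquiv_of_inl_preimage hE] at h
    · rw [eq_phiEquiv_of_inl_preimage hD, eq_phiEquiv_of_inl_preimage hE] at h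
      exact h.symm
  · intro h
    exact ⟨fun hDE => h.ne (by rw [hDE]), .inl ⟨_, _, h, by simp, by simp⟩⟩

noncomputable def renameIso : renameT G CT CT' ≃g CT'.T :=
  ⟨phiEquiv CT, (renameT_adj_iff CT').symm⟩

@[simp] lemma renameIso_apply (D : MaxCliques G) : renameIso CT' D = phiEquiv CT D := rfl

lemma isTree_renameT : (renameT G CT CT').IsTree :=
  (renameIso CT').isTree_iff.mpr CT'.tree

lemma numLeaves_renameT : numLeaves (renameT G CT CT') = numLeaves CT'.T :=
  (renameIso CT').numLeaves_eq

lemma renameT_path_cond (D E : MaxCliques G) (p : (renameT G CT CT').Walk D E) (hp : p.IsPath)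
    (Dmid : MaxCliques G) (hmid : Dmid ∈ p.support) : D.1 ∩ E.1 ⊆ Dmid.1 := by
  intro u hu
  have hmem : renameIso CT' Dmid ∈ (p.map (renameIso CT').toHom).support := by
    rw [Walk.support_map]
    exact List.mem_map_of_mem hmid
  have := CT'.path_cond _ _ _ ((Walk.isPath_map_iff_of_injective (renameIso CT').injective).mpr hp)
    _ hmem (show Sum.inl u ∈ _ ∩ _ by simpa using hu)
  simpa using this

lemma Ee_subset_edgeSet_renameT : Ee CT.T ⊆ (renameT G CT CT').edgeSet := by
  intro e he
  induction e using Sym2.ind with | _ A B => ?_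
  have hAB : CT.T.Adj A B := he.1
  refine (renameT_adj_iff CT').mpr (CT'.adj_of_forall_mem_eq_or_eq
    (fun h => hAB.ne ((phiEquiv CT).injective h)) (x := .inr ⟨_, he⟩) (by simp) (by simp) ?_)
  intro D' hD'
  obtain ⟨D, rfl⟩ := (phiEquiv CT).surjective D'
  simpa using hD'

end Rename

section TreeModel

variable {V : Type} [Finite V] {G : SimpleGraph V}

noncomputable def cliqueTreeModel (CT : CliqueTree G) : TreeModel (Gprime G CT) where
  W := MaxCliques G
  finW := inferInstance
  T := CT.T
  tree := CT.tree
  sub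
    | .inl u => cliqueSub G u
    | .inr e => {C | C ∈ e.1}
  sub_nonempty
    | .inl u => (exists_maxClique_superset (G.isClique_singleton u)).imp fun _ h => h rfl
    | .inr e => ⟨_, e.1.out_fst_mem⟩
  sub_conn
    | .inl u => CT.connected_induce_cliqueSub u
    | .inr e => connected_induce_mem_of_mem_edgeSet e.2.1
  adj_iff
    | .inl u, .inl v, huv => by
      simpa [cliqueSub, Set.Nonempty] using adj_iff_exists_maxClique (fun h => huv (congrArg _ h))
    | .inl u, .inr e, _ => by simp [cliqueSub, Set.Nonempty, and_comm]
    | .inr e, .inl u, _ => by simp [cliqueSub, Set.Nonempty]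
    | .inr e, .inr f, hef => by
      have : e ≠ f := fun h => hef (congrArg _ h)
      simp [Set.Nonempty, this]

lemma leafage_gprime_le (CT : CliqueTree G) : leafage (Gprime G CT) ≤ numLeaves CT.T :=
  Nat.sInf_le ⟨cliqueTreeModel CT, rfl⟩

end TreeModel

/-- Let `F = Ee(T*)`, let `T'` be a clique tree of `G'` with `|L(T')| = ℓ(G')`, and let
`T` be obtained from `T'` by renaming each node `C'` to `C' ∩ V(G)`. Then `T` is a
clique tree of `G` (a tree on the maximal cliques satisfying the clique-tree condition),
`F ⊆ E(T)`, `Hh(T) = Hh(T*)`, `Ee(T) = Ee(T*) = F`, and `|L(T)| = |L(T*)|`. -/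
theorem stmt11 {V : Type} [Fintype V] (G : SimpleGraph V) (CTstar : CliqueTree G)
    (CT' : CliqueTree (Gprime G CTstar))
    (hopt : numLeaves CT'.T = leafage (Gprime G CTstar)) :
    (renameT G CTstar CT').IsTree ∧
    (∀ (D E : MaxCliques G) (p : (renameT G CTstar CT').Walk D E), p.IsPath →
      ∀ Dmid ∈ p.support, D.1 ∩ E.1 ⊆ Dmid.1) ∧
    Ee CTstar.T ⊆ (renameT G CTstar CT').edgeSet ∧
    Hh (renameT G CTstar CT') = Hh CTstar.T ∧
    Ee (renameT G CTstar CT') = Ee CTstar.T ∧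
    numLeaves (renameT G CTstar CT') = numLeaves CTstar.T := by
  have hF := Ee_subset_edgeSet_renameT CT'
  have hle : numLeaves (renameT G CTstar CT') ≤ numLeaves CTstar.T := by
    rw [numLeaves_renameT, hopt]
    exact leafage_gprime_le CTstar
  obtain ⟨hHh, hEe, hleaves⟩ :=
    (isTree_renameT CT').Hh_eq_and_Ee_eq_and_numLeaves_eq CTstar.tree hF hle
  exact ⟨isTree_renameT CT', renameT_path_cond CT', hF, hHh, hEe, hleaves⟩
end

section
/- Let T and T* be finite trees on the same vertex set, each with at least two vertices, and suppose Ee(T*) ⊆ E(T), i.e., every edge of T* incident to a vertex of degree at least 3 in T* is also an edge of T. Then Hh(T*) ⊆ Hh(T), every C ∈ Hh(T*) satisfies N_{T*}(C) ⊆ N_T(C), and |L(T*)| ≤ |L(T)|. If moreover |L(T)| ≤ |L(T*)|, then Hh(T) = Hh(T*), every C ∈ Hh(T) satisfies N_T(C) = N_{T*}(C), and Ee(T) = Ee(T*). -/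
open SimpleGraph

/-! In a tree with at least two vertices the handshake lemma gives `|L(T)| = 2 + Σ_v (deg v - 2)⁺`.
The hypothesis `Ee(T*) ⊆ E(T)` makes every neighbour of a high-degree node of `T*` a neighbour in
`T`, so the excess `(deg v - 2)⁺` can only grow from `T*` to `T`; hence `|L(T*)| ≤ |L(T)|`, and
equality of leaf counts forces equal excess at every vertex, which pins down `Hh`, the neighbourhoods
of its nodes, and therefore `Ee`. -/

namespace SimpleGraph

variable {W : Type*}

lemma deg_eq_degree_s12 (T : SimpleGraph W) (w : W) [Fintype (T.neighborSet w)] :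
    deg T w = T.degree w := by
  rw [deg, Set.ncard_eq_toFinset_card', Set.toFinset_card, card_neighborSet_eq_degree]

lemma mem_Hh_iff_pos_deg_sub_two {T : SimpleGraph W} {w : W} : w ∈ Hh T ↔ 0 < deg T w - 2 := by
  simp only [Hh, Set.mem_ofPred_eq]
  omega

lemma mem_Ee_iff {T : SimpleGraph W} {e : Sym2 W} :
    e ∈ Ee T ↔ ∃ w ∈ Hh T, ∃ v ∈ T.neighborSet w, e = s(w, v) := by
  constructor
  · rintro ⟨he, w, hw, hwH⟩
    obtain ⟨v, rfl⟩ := Sym2.mem_iff_exists.1 hw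
    exact ⟨w, hwH, v, he, rfl⟩
  · rintro ⟨w, hwH, v, hv, rfl⟩
    exact ⟨hv, w, Sym2.mem_mk_left w v, hwH⟩

lemma Ee_congr {T T' : SimpleGraph W} (hH : Hh T = Hh T')
    (hN : ∀ C ∈ Hh T, T.neighborSet C = T'.neighborSet C) : Ee T = Ee T' := by
  ext e
  simp only [mem_Ee_iff, ← hH]
  exact exists_congr fun C => and_congr_right fun hC => by rw [hN C hC]

/-- Truncated subtraction makes `deg T v - 2` vanish off `Hh T`. Sum `(d - 2) + 2 = d + [d = 1]`
(valid for `d ≥ 1`) over the vertices and apply the handshake lemma. -/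
lemma IsTree.numLeaves_eq_two_add_sum [Fintype W] [Nontrivial W] {T : SimpleGraph W}
    (hT : T.IsTree) : numLeaves T = 2 + ∑ v, (deg T v - 2) := by
  classical
  have hpos : ∀ v, 0 < deg T v := fun v => by
    rw [deg_eq_degree_s12]; exact hT.connected.preconnected.degree_pos_of_nontrivial v
  have hpointwise : ∀ v, (deg T v - 2) + 2 = deg T v + if deg T v = 1 then 1 else 0 := fun v => by
    have := hpos v; split_ifs <;> omega
  have hsum := Finset.sum_congr rfl fun v (_ : v ∈ Finset.univ) => hpointwise v
  rw [Finset.sum_add_distrib, Finset.sum_add_distrib, Finset.sum_boole, Finset.sum_const,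
    Finset.card_univ, smul_eq_mul] at hsum
  have hhandshake : ∑ v, deg T v + 2 = 2 * Fintype.card W := by
    simp only [deg_eq_degree_s12, sum_degrees_eq_twice_card_edges, ← hT.card_edgeFinset]
    ring
  have hleaves : numLeaves T = (Finset.univ.filter fun v => deg T v = 1).card := by
    rw [numLeaves, leaves, ← Set.ncard_coe_finset, Finset.coe_filter_univ]
  rw [hleaves]
  push_cast at hsum
  omega

variable {T Tstar : SimpleGraph W} (hEe : Ee Tstar ⊆ T.edgeSet)
include hEe

lemma neighborSet_subset_of_Ee_subset {C : W} (hC : C ∈ Hh Tstar) :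
    Tstar.neighborSet C ⊆ T.neighborSet C :=
  fun v hv => hEe ⟨hv, C, Sym2.mem_mk_left C v, hC⟩

lemma deg_le_of_Ee_subset [Finite W] {C : W} (hC : C ∈ Hh Tstar) : deg Tstar C ≤ deg T C :=
  Set.ncard_le_ncard (neighborSet_subset_of_Ee_subset hEe hC) (Set.toFinite _)

lemma Hh_subset_of_Ee_subset [Finite W] : Hh Tstar ⊆ Hh T :=
  fun _ hC => le_trans hC (deg_le_of_Ee_subset hEe hC)

lemma deg_sub_two_le_of_Ee_subset [Finite W] (v : W) : deg Tstar v - 2 ≤ deg T v - 2 := by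
  by_cases hv : v ∈ Hh Tstar
  · exact Nat.sub_le_sub_right (deg_le_of_Ee_subset hEe hv) 2
  · simp only [Hh, Set.mem_ofPred_eq, not_le] at hv
    omega

end SimpleGraph

/-- Let `T` and `T*` be finite trees on the same vertex set, each with at least two
vertices, with `Ee(T*) ⊆ E(T)`. Then `Hh(T*) ⊆ Hh(T)`, every `C ∈ Hh(T*)` satisfies
`N_{T*}(C) ⊆ N_T(C)`, and `|L(T*)| ≤ |L(T)|`. If moreover `|L(T)| ≤ |L(T*)|`, then
`Hh(T) = Hh(T*)`, every `C ∈ Hh(T)` satisfies `N_T(C) = N_{T*}(C)`, and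
`Ee(T) = Ee(T*)`. -/
theorem stmt12 {W : Type} [Fintype W] (T Tstar : SimpleGraph W)
    (hT : T.IsTree) (hTstar : Tstar.IsTree) (h2 : 2 ≤ Fintype.card W)
    (hEe : Ee Tstar ⊆ T.edgeSet) :
    (Hh Tstar ⊆ Hh T ∧
      (∀ C ∈ Hh Tstar, Tstar.neighborSet C ⊆ T.neighborSet C) ∧
      numLeaves Tstar ≤ numLeaves T) ∧
    (numLeaves T ≤ numLeaves Tstar →
      (Hh T = Hh Tstar ∧
        (∀ C ∈ Hh T, T.neighborSet C = Tstar.neighborSet C) ∧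
        Ee T = Ee Tstar)) := by
  have : Nontrivial W := Fintype.one_lt_card_iff_nontrivial.1 h2
  have hexcess := deg_sub_two_le_of_Ee_subset hEe
  have hsum : ∑ v, (deg Tstar v - 2) ≤ ∑ v, (deg T v - 2) :=
    Finset.sum_le_sum fun v _ => hexcess v
  rw [hT.numLeaves_eq_two_add_sum, hTstar.numLeaves_eq_two_add_sum]
  refine ⟨⟨Hh_subset_of_Ee_subset hEe, fun _ => neighborSet_subset_of_Ee_subset hEe,
    Nat.add_le_add_left hsum 2⟩, fun hle => ?_⟩
  have hexcess_eq : ∀ v, deg Tstar v - 2 = deg T v - 2 := fun v =>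
    (Finset.sum_eq_sum_iff_of_le fun v _ => hexcess v).1 (by omega) v (Finset.mem_univ v)
  have hH : Hh T = Hh Tstar := by
    ext v
    rw [mem_Hh_iff_pos_deg_sub_two, mem_Hh_iff_pos_deg_sub_two, hexcess_eq]
  have hN : ∀ C ∈ Hh T, T.neighborSet C = Tstar.neighborSet C := fun C hC => by
    have hCs : C ∈ Hh Tstar := hH ▸ hC
    refine (Set.eq_of_subset_of_ncard_le (neighborSet_subset_of_Ee_subset hEe hCs) ?_).symm
    have := hexcess_eq C
    simp only [Hh, Set.mem_ofPred_eq] at hC hCs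
    change deg T C ≤ deg Tstar C
    omega
  exact ⟨hH, hN, Ee_congr hH hN⟩
end

section
/- Let G be a chordal graph, let T be a clique tree of G and let τ = ε_T. Let (C_1, C_2, S_1), (C_2, C_3, S_2), …, (C_{k−1}, C_k, S_{k−1}) be an augmenting path of τ whose cliques C_1, …, C_k are pairwise distinct, and let τ' be the token assignment obtained by applying the augmenting path. Suppose τ' is realizable, say τ' = ε_{T'} for a clique tree T' of G. Then for every vertex u of G, |L(T'_u)| ≤ |L(T_u)|, where T_u (respectively T'_u) is the subtree of T (respectively T') induced by the maximal cliques containing u. -/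
/-! For a clique `D ∋ u` of a clique tree `T`, the tokens of `ε_T(D)` containing `u` are the
intersections with the neighbours of `D` in `T_u`, so the leaves of `T_u` are the cliques
containing `u` that hold exactly one `u`-token: leaves can be read off the token assignment.
Applying the path moves tokens forward along `C_0, …, C_{k-1}`. A clique can only become a new
`u`-leaf at the start of a maximal run `S_a, …, S_{b-1}` of consecutive tokens containing `u`.
The clique `C_b` closing the run was a `u`-leaf of `T`: it has a `u`-token because `u` lies in
`C_{b-1}` and in `C_b` (`S_{b-1}` is a token of `C_b` in `ε_{T'}`), and at most one because
either `|ε_T(C_b)| = 1`, or `|ε_T(C_b)| = 2` and `u ∉ S_b`. It receives a second `u`-token and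
stops being a leaf, so every leaf gained is paid for by a leaf lost. -/


open SimpleGraph

open scoped Classical in
/-- The token assignment `ε_T` defined by a clique tree: `ε_T(C)` is the multiset of
intersections `C ∩ C'` over the neighbours `C'` of `C` in the tree. -/
noncomputable def epsT {V : Type} [Fintype V] {G : SimpleGraph V} (CT : CliqueTree G)
    (C : MaxCliques G) : Multiset (Set V) :=
  ((CT.T.neighborSet C).toFinite.toFinset.val).map (fun C' => C.1 ∩ C'.1)

open scoped Classical in
/-- The token move `τ ÷ (C₁, C₂, S)`: one copy of `S` is removed from `τ(C₁)` and added
to `τ(C₂)`. -/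
noncomputable def moveTok {V : Type} [Fintype V] {G : SimpleGraph V}
    (τ : MaxCliques G → Multiset (Set V)) (C1 C2 : MaxCliques G) (S : Set V) :
    MaxCliques G → Multiset (Set V) :=
  fun D => if D = C1 then (τ C1).erase S else if D = C2 then S ::ₘ τ C2 else τ D

/-- A realizable token assignment: one defined by some clique tree of `G`. -/
def Realizable {V : Type} [Fintype V] (G : SimpleGraph V)
    (τ : MaxCliques G → Multiset (Set V)) : Prop :=
  ∃ CT : CliqueTree G, ∀ D, epsT CT D = τ D

/-- The token assignment obtained from `τ` by applying the first `j` token moves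
`(C 0, C 1, S 0), …, (C (j-1), C j, S (j-1))`. -/
noncomputable def applyPath {V : Type} [Fintype V] {G : SimpleGraph V}
    (τ : MaxCliques G → Multiset (Set V)) (C : ℕ → MaxCliques G) (S : ℕ → Set V) :
    ℕ → (MaxCliques G → Multiset (Set V))
  | 0 => τ
  | (j+1) => moveTok (applyPath τ C S j) (C j) (C (j+1)) (S j)

open scoped Classical

section ApplyPath

variable {V : Type} [Fintype V] {G : SimpleGraph V}
  (τ : MaxCliques G → Multiset (Set V)) (C : ℕ → MaxCliques G) (S : ℕ → Set V)

lemma applyPath_apply_of_notMem_image {m : ℕ} {D : MaxCliques G}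
    (hD : D ∉ C '' Set.Iic m) : applyPath τ C S m D = τ D := by
  induction m with
  | zero => rfl
  | succ n ih =>
    have hn : D ≠ C n := fun h => hD ⟨n, by simp, h.symm⟩
    have hn1 : D ≠ C (n + 1) := fun h => hD ⟨n + 1, by simp, h.symm⟩
    rw [applyPath, moveTok, if_neg hn, if_neg hn1]
    exact ih fun ⟨j, hj, h⟩ => hD ⟨j, Set.mem_Iic.2 (Nat.le_succ_of_le hj), h⟩

lemma applyPath_apply_add {m : ℕ} (hC : Set.InjOn C (Set.Iic m))
    (hS : ∀ j < m, S j ∈ τ (C j)) {i : ℕ} (hi : i ≤ m) :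
    applyPath τ C S m (C i) + (if i < m then {S i} else 0) =
      τ (C i) + (if 0 < i then {S (i - 1)} else 0) := by
  induction m generalizing i with
  | zero =>
    obtain rfl : i = 0 := by omega
    simp [applyPath]
  | succ n ih =>
    have ih' {l : ℕ} (hl : l ≤ n) :=
      ih (hC.mono (Set.Iic_subset_Iic.2 n.le_succ)) (fun j hj => hS j (by omega)) hl
    have hne : ∀ j ≤ n + 1, ∀ l ≤ n + 1, j ≠ l → C j ≠ C l :=
      fun j hj l hl hjl h => hjl (hC (Set.mem_Iic.2 hj) (Set.mem_Iic.2 hl) h)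
    rcases (show i < n ∨ i = n ∨ i = n + 1 by omega) with hi | rfl | rfl
    · have h := ih' hi.le
      rw [if_pos hi] at h
      rwa [applyPath, moveTok, if_neg (hne i (by omega) n (by omega) (by omega)),
        if_neg (hne i (by omega) (n + 1) (by omega) (by omega)), if_pos (by omega)]
    · have h := ih' le_rfl
      rw [if_neg (lt_irrefl i), add_zero] at h
      have hmem : S i ∈ applyPath τ C S i (C i) :=
        h ▸ Multiset.mem_add.2 (.inl (hS i i.lt_succ_self))
      rw [applyPath, moveTok, if_pos rfl, if_pos i.lt_succ_self, ← h, add_comm,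
        Multiset.singleton_add, Multiset.cons_erase hmem]
    · have hout : C (n + 1) ∉ C '' Set.Iic n := fun ⟨j, hj, h⟩ =>
        hne j (by simp at hj; omega) (n + 1) le_rfl (by simp at hj; omega) h
      rw [applyPath, moveTok, if_neg (hne (n + 1) le_rfl n (by omega) (by omega)), if_pos rfl,
        applyPath_apply_of_notMem_image τ C S hout, if_neg (lt_irrefl _), if_pos n.succ_pos,
        add_zero, Nat.add_sub_cancel, ← Multiset.singleton_add, add_comm]

lemma mem_applyPath_apply_succ_or {m : ℕ} (hC : Set.InjOn C (Set.Iic m))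
    (hS : ∀ j < m, S j ∈ τ (C j)) {j : ℕ} (hj : j < m) :
    S j ∈ applyPath τ C S m (C (j + 1)) ∨ S j ∈ τ (C (j + 1)) := by
  have h := applyPath_apply_add τ C S hC hS (i := j + 1) hj
  rw [if_pos j.succ_pos, Nat.add_sub_cancel] at h
  have hj_mem : S j ∈ τ (C (j + 1)) + {S j} :=
    Multiset.mem_add.2 (.inr (Multiset.mem_singleton_self _))
  rcases Multiset.mem_add.1 (h ▸ hj_mem) with h' | h'
  · exact .inl h'
  · split_ifs at h' with hj'
    exacts [.inr (Multiset.mem_singleton.1 h' ▸ hS _ hj'), absurd h' (Multiset.notMem_zero _)]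

end ApplyPath

lemma Multiset.countP_add_ite_singleton {α : Type*} (p : α → Prop) [DecidablePred p]
    (M : Multiset α) (c : Prop) [Decidable c] (x : α) :
    (M + if c then {x} else 0).countP p = M.countP p + if c ∧ p x then 1 else 0 := by
  by_cases hc : c <;> by_cases hx : p x <;>
    simp [hc, hx, Multiset.countP_eq_card_filter, Multiset.filter_singleton]

lemma Multiset.countP_lt_card {α : Type*} {p : α → Prop} [DecidablePred p] {M : Multiset α}
    {a : α} (ha : a ∈ M) (hpa : ¬p a) : M.countP p < Multiset.card M :=
  (Multiset.countP_le_card p M).lt_of_ne fun h => hpa (Multiset.countP_eq_card.1 h a ha)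

lemma Set.ncard_inter_image_Iic {α : Type*} (A : Set α) {C : ℕ → α} {K : ℕ}
    (hC : Set.InjOn C (Set.Iic K)) :
    (A ∩ C '' Set.Iic K).ncard = ∑ j ∈ Finset.range (K + 1), if C j ∈ A then 1 else 0 := by
  have h : A ∩ C '' Set.Iic K = C '' ↑((Finset.range (K + 1)).filter (C · ∈ A)) := by
    ext D
    simp only [Set.mem_inter_iff, Set.mem_image, Set.mem_Iic, Finset.coe_filter,
      Finset.mem_range, Set.mem_ofPred_eq, Nat.lt_succ_iff]
    constructor
    · rintro ⟨hD, j, hj, rfl⟩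
      exact ⟨j, ⟨hj, hD⟩, rfl⟩
    · rintro ⟨j, ⟨hj, hD⟩, rfl⟩
      exact ⟨hD, j, hj, rfl⟩
  rw [h, (hC.mono fun j hj => by simp at hj; simpa using by omega).ncard_image,
    Set.ncard_coe_finset, Finset.card_filter]

lemma Finset.sum_range_succ_ite_pred (p : ℕ → Prop) [DecidablePred p] (K : ℕ) :
    ∑ j ∈ Finset.range (K + 1), (if 0 < j ∧ p (j - 1) then 1 else 0) =
      ∑ j ∈ Finset.range (K + 1), if j < K ∧ p j then 1 else 0 := by
  rw [Finset.sum_range_succ', Finset.sum_range_succ]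
  simp only [false_and, if_false, add_zero, Nat.succ_pos, true_and,
    Nat.add_sub_cancel, lt_irrefl]
  exact Finset.sum_congr rfl fun j hj => by simp [Finset.mem_range.1 hj]

section TokenLeaves

variable {V : Type} [Fintype V] {G : SimpleGraph V}

def tokenLeaves (τ : MaxCliques G → Multiset (Set V)) (u : V) : Set (MaxCliques G) :=
  {D | u ∈ D.1 ∧ (τ D).countP (u ∈ ·) = 1}

theorem ncard_tokenLeaves_applyPath_le (τ : MaxCliques G → Multiset (Set V))
    (C : ℕ → MaxCliques G) (S : ℕ → Set V) (u : V) (K : ℕ) (hC : Set.InjOn C (Set.Iic K))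
    (hS : ∀ j < K, S j ∈ τ (C j))
    (hend : ∀ j < K, u ∈ S j → (j + 1 < K → u ∉ S (j + 1)) → C (j + 1) ∈ tokenLeaves τ u) :
    (tokenLeaves (applyPath τ C S K) u).ncard ≤ (tokenLeaves τ u).ncard := by
  set τ' := applyPath τ C S K
  set R := C '' Set.Iic K
  have hoff : tokenLeaves τ' u \ R = tokenLeaves τ u \ R := by
    ext D
    simp only [Set.mem_sdiff, tokenLeaves, Set.mem_ofPred_eq]
    constructor <;> rintro ⟨h, hD⟩ <;>
      simpa [τ', applyPath_apply_of_notMem_image τ C S hD, hD] using h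
  have hstep : ∀ j ∈ Finset.range (K + 1),
      (if C j ∈ tokenLeaves τ' u then 1 else 0) + (if 0 < j ∧ u ∈ S (j - 1) then 1 else 0) ≤
        (if C j ∈ tokenLeaves τ u then 1 else 0) + (if j < K ∧ u ∈ S j then 1 else 0) := by
    intro j hj
    have hj : j ≤ K := Nat.lt_succ_iff.1 (Finset.mem_range.1 hj)
    have hcount := congrArg (Multiset.countP (u ∈ ·)) (applyPath_apply_add τ C S hC hS hj)
    simp only [Multiset.countP_add_ite_singleton] at hcount
    have hrun : 0 < j ∧ u ∈ S (j - 1) → ¬(j < K ∧ u ∈ S j) → C j ∈ tokenLeaves τ u := by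
      rintro ⟨hj0, hin⟩ hout
      obtain ⟨i, rfl⟩ : ∃ i, j = i + 1 := ⟨j - 1, by omega⟩
      exact hend i (by omega) hin fun hi hS' => hout ⟨hi, hS'⟩
    simp only [tokenLeaves, Set.mem_ofPred_eq] at hrun ⊢
    split_ifs at hcount ⊢ <;> grind
  rw [← Set.ncard_inter_add_ncard_sdiff_eq_ncard (tokenLeaves τ' u) R,
    ← Set.ncard_inter_add_ncard_sdiff_eq_ncard (tokenLeaves τ u) R, hoff,
    Set.ncard_inter_image_Iic _ hC, Set.ncard_inter_image_Iic _ hC]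
  have := Finset.sum_le_sum hstep
  rw [Finset.sum_add_distrib, Finset.sum_add_distrib,
    Finset.sum_range_succ_ite_pred (u ∈ S ·)] at this
  omega

end TokenLeaves

section CliqueTree

variable {V : Type} [Fintype V] {G : SimpleGraph V}

lemma subset_of_mem_epsT (CT : CliqueTree G) {D : MaxCliques G} {S : Set V}
    (hS : S ∈ epsT CT D) : S ⊆ D.1 := by
  obtain ⟨D', -, rfl⟩ := Multiset.mem_map.1 hS
  exact Set.inter_subset_left

lemma ncard_neighborSet_inter_cliqueSub (CT : CliqueTree G) {u : V} {D : MaxCliques G}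
    (hu : u ∈ D.1) :
    (CT.T.neighborSet D ∩ cliqueSub G u).ncard = (epsT CT D).countP (u ∈ ·) := by
  rw [epsT, Multiset.countP_map, ← Finset.filter_val, ← Finset.card_def, ← Set.ncard_coe_finset]
  congr 1
  ext D'
  simp [cliqueSub, hu]

lemma subLeaves_cliqueSub (CT : CliqueTree G) (u : V) :
    subLeaves CT.T (cliqueSub G u) = tokenLeaves (epsT CT) u := by
  ext D
  simp only [subLeaves, tokenLeaves, Set.mem_ofPred_eq]
  exact and_congr_right fun hu => by rw [ncard_neighborSet_inter_cliqueSub CT hu]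

lemma countP_epsT_pos (CT : CliqueTree G) {u : V} {D D' : MaxCliques G} (hu : u ∈ D.1)
    (hu' : u ∈ D'.1) (hne : D ≠ D') : 0 < (epsT CT D).countP (u ∈ ·) := by
  obtain ⟨p, hp⟩ : ∃ p : CT.T.Walk D D', p.IsPath :=
    ⟨_, (CT.tree.connected.preconnected D D').some.bypass_isPath⟩
  cases p with
  | nil => exact absurd rfl hne
  | @cons _ D₁ _ hadj q =>
    have hu₁ : u ∈ D₁.1 := CT.path_cond D D' _ hp D₁ (by simp) ⟨hu, hu'⟩
    refine Multiset.countP_pos.2 ⟨D.1 ∩ D₁.1, Multiset.mem_map_of_mem _ ?_, hu, hu₁⟩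
    simpa using hadj

lemma mem_tokenLeaves_epsT (CT : CliqueTree G) {u : V} {D D' : MaxCliques G} (hu : u ∈ D.1)
    (hu' : u ∈ D'.1) (hne : D ≠ D') (hle : (epsT CT D).countP (u ∈ ·) ≤ 1) :
    D ∈ tokenLeaves (epsT CT) u :=
  ⟨hu, le_antisymm hle (countP_epsT_pos CT hu hu' hne)⟩

end CliqueTree

theorem stmt14_general {V : Type} [Fintype V] (G : SimpleGraph V) (CT : CliqueTree G)
    (k : ℕ) (C : ℕ → MaxCliques G) (S : ℕ → Set V)
    (hdist : ∀ i j, i < k → j < k → C i = C j → i = j)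
    (hlast : (epsT CT (C (k - 1))).card = 1)
    (hmid : ∀ j, 0 < j → j < k - 1 → (epsT CT (C j)).card = 2)
    (hmem : ∀ j, j < k - 1 → S j ∈ epsT CT (C j))
    (CT' : CliqueTree G)
    (hfinal : ∀ D, epsT CT' D = applyPath (epsT CT) C S (k - 1) D) :
    ∀ u : V, numSubLeaves CT'.T (cliqueSub G u) ≤ numSubLeaves CT.T (cliqueSub G u) := by
  intro u
  have hC : Set.InjOn C (Set.Iic (k - 1)) := fun i hi j hj h => by
    simp only [Set.mem_Iic] at hi hj
    rcases Nat.eq_zero_or_pos k with rfl | hk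
    · omega
    · exact hdist i j (by omega) (by omega) h
  have hS_succ : ∀ j < k - 1, S j ⊆ (C (j + 1)).1 := fun j hj =>
    (mem_applyPath_apply_succ_or (epsT CT) C S hC hmem hj).elim
      (fun h => subset_of_mem_epsT CT' (hfinal _ ▸ h)) (subset_of_mem_epsT CT)
  rw [numSubLeaves, numSubLeaves, subLeaves_cliqueSub, subLeaves_cliqueSub, funext hfinal]
  refine ncard_tokenLeaves_applyPath_le _ C S u _ hC hmem fun j hj hu hnext => ?_
  refine mem_tokenLeaves_epsT CT (hS_succ j hj hu) (subset_of_mem_epsT CT (hmem j hj) hu)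
    (fun h => j.succ_ne_self (hC (Set.mem_Iic.2 hj) (Set.mem_Iic.2 hj.le) h)) ?_
  rcases (show j + 1 < k - 1 ∨ j + 1 = k - 1 by omega) with hj' | hj'
  · have := Multiset.countP_lt_card (p := (u ∈ ·)) (hmem _ hj') (hnext hj')
    rw [hmid _ j.succ_pos hj'] at this
    omega
  · exact (Multiset.countP_le_card _ _).trans_eq (hj' ▸ hlast)

/-- Let `τ = ε_T` for a clique tree `T` of `G`, let
`(C 0, C 1, S 0), …, (C (k-2), C (k-1), S (k-2))` be an augmenting path of `τ` (with
`k ≥ 2`) whose cliques `C 0, …, C (k-1)` are pairwise distinct, and let `τ'` be the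
result of applying the augmenting path. If `τ'` is realizable, say `τ' = ε_{T'}` for a
clique tree `T'`, then for every vertex `u` of `G`, `|L(T'_u)| ≤ |L(T_u)|`. -/
theorem stmt14 {V : Type} [Fintype V] (G : SimpleGraph V) (CT : CliqueTree G)
    (k : ℕ) (hk : 2 ≤ k) (C : ℕ → MaxCliques G) (S : ℕ → Set V)
    (hdist : ∀ i j, i < k → j < k → C i = C j → i = j)
    (hlast : (epsT CT (C (k - 1))).card = 1)
    (hfirst : 3 ≤ (epsT CT (C 0)).card)
    (hmid : ∀ j, 0 < j → j < k - 1 → (epsT CT (C j)).card = 2)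
    (hmem : ∀ j, j < k - 1 → S j ∈ epsT CT (C j))
    (hreal : ∀ j, j < k - 1 →
      Realizable G (moveTok (epsT CT) (C j) (C (j + 1)) (S j)))
    (CT' : CliqueTree G)
    (hfinal : ∀ D, epsT CT' D = applyPath (epsT CT) C S (k - 1) D) :
    ∀ u : V, numSubLeaves CT'.T (cliqueSub G u) ≤ numSubLeaves CT.T (cliqueSub G u) :=
  stmt14_general G CT k C S hdist hlast hmid hmem CT' hfinal
end

section
/- Let k ≥ 1 and let a_1, …, a_k and b_1, …, b_k be nonnegative integers such that: (1) for every i, if b_i = 1 then a_i ≥ 1; and (2) for every i with b_i = 1 and a_i ≥ 2, there exists j > i such that a_j = 1, b_j = 2, and a_r = b_r for all r with i < r < j. Then |{i : b_i = 1}| ≤ |{i : a_i = 1}|. -/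
/-!
Send each `i` with `b i = 1` to itself when `a i = 1`, and otherwise to the index `j` that
hypothesis (2) provides. This relation is injective: a partner `j` has `b j = 2`, so it is never
a fixed point, and if `i < i'` shared the partner `j` then `i < i' < j` would force
`a i' = b i'`, which fails for every index that needs a partner.
-/

def IsPartner (a b : ℕ → ℕ) (i j : ℕ) : Prop :=
  i < j ∧ a j = 1 ∧ b j = 2 ∧ ∀ r, i < r → r < j → a r = b r

theorem IsPartner.eq_of_ne {a b : ℕ → ℕ} {i i' j : ℕ} (h : IsPartner a b i j)
    (h' : IsPartner a b i' j) (hi : a i ≠ b i) (hi' : a i' ≠ b i') : i = i' := by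
  rcases lt_trichotomy i i' with hlt | heq | hgt
  · exact absurd (h.2.2.2 i' hlt h'.1) hi'
  · exact heq
  · exact absurd (h'.2.2.2 i hgt h.1) hi

theorem stmt15_general (k : ℕ) (a b : ℕ → ℕ)
    (h1 : ∀ i < k, b i = 1 → 1 ≤ a i)
    (h2 : ∀ i < k, b i = 1 → 2 ≤ a i →
      ∃ j, i < j ∧ j < k ∧ a j = 1 ∧ b j = 2 ∧ ∀ r, i < r → r < j → a r = b r) :
    ((Finset.range k).filter (fun i => b i = 1)).card ≤
      ((Finset.range k).filter (fun i => a i = 1)).card := by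
  refine Finset.card_le_card_of_forall_subsingleton
    (fun i j => j = i ∨ a i ≠ b i ∧ IsPartner a b i j) ?_ ?_
  · intro i hi
    simp only [Finset.mem_filter, Finset.mem_range] at hi ⊢
    obtain ⟨hik, hbi⟩ := hi
    by_cases hai : 2 ≤ a i
    · obtain ⟨j, hij, hjk, haj, hbj, hr⟩ := h2 i hik hbi hai
      exact ⟨j, ⟨hjk, haj⟩, Or.inr ⟨by omega, hij, haj, hbj, hr⟩⟩
    · exact ⟨i, ⟨hik, by have := h1 i hik hbi; omega⟩, Or.inl rfl⟩
  · rintro j - i ⟨hi, rfl | ⟨hai, hpi⟩⟩ i' ⟨hi', rfl | ⟨hai', hpi'⟩⟩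
    all_goals simp only [Finset.mem_filter] at hi hi'
    · rfl
    · exact absurd hpi'.2.2.1 (by omega)
    · exact absurd hpi.2.2.1 (by omega)
    · exact hpi.eq_of_ne hpi' hai hai'

/-- Let `a_1, …, a_k` and `b_1, …, b_k` (here indexed `0, …, k-1`) be nonnegative
integers such that (1) `b i = 1` implies `a i ≥ 1`, and (2) whenever `b i = 1` and
`a i ≥ 2` there is `j > i` with `a j = 1`, `b j = 2`, and `a r = b r` for all
`i < r < j`. Then `|{i : b i = 1}| ≤ |{i : a i = 1}|`. -/
theorem stmt15 (k : ℕ) (hk : 1 ≤ k) (a b : ℕ → ℕ)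
    (h1 : ∀ i < k, b i = 1 → 1 ≤ a i)
    (h2 : ∀ i < k, b i = 1 → 2 ≤ a i →
      ∃ j, i < j ∧ j < k ∧ a j = 1 ∧ b j = 2 ∧ ∀ r, i < r → r < j → a r = b r) :
    ((Finset.range k).filter (fun i => b i = 1)).card ≤
      ((Finset.range k).filter (fun i => a i = 1)).card :=
  stmt15_general k a b h1 h2
end
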